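/- arXiv:2105.14810 — 7 statements merged into one kernel-verified Lean document; each statement's English description precedes it below -/
import Mathlib

section
/- Let 0 < θ < ∞ and let (a_k), (b_k) be sequences of positive reals. If there exists C > 0 such that for all n, ∑_{k=0}^{n} a_k ≤ C · a_n, then there exists C' > 0 (depending only on C and θ) such that ∑_{n=0}^{∞} a_n (∑_{k=n}^{∞} b_k)^θ ≤ C' · ∑_{n=0}^{∞} a_n b_n^θ. -/
open scoped ENNReal
open MeasureTheory

private lemma tsum_holder {p q : ℝ} (hpq : p.HolderConjugate q) (f g : ℕ → ℝ≥0∞) :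
    ∑' n, f n * g n ≤ (∑' n, f n ^ p) ^ (1 / p) * (∑' n, g n ^ q) ^ (1 / q) := by
  have h := ENNReal.lintegral_mul_le_Lp_mul_Lq (Measure.count : Measure ℕ) hpq
    (measurable_of_countable f).aemeasurable (measurable_of_countable g).aemeasurable
  simpa [MeasureTheory.lintegral_count] using h

private lemma tsum_tail (g : ℕ → ℝ≥0∞) (n : ℕ) :
    ∑' k, g (n + k) = ∑' m, if n ≤ m then g m else 0 := by
  have hinj : Function.Injective (fun k => n + k) := fun x y h => by simpa using h
  have h := hinj.tsum_eq (f := fun m => if n ≤ m then g m else 0) ?_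
  · simpa using h
  · intro m hm
    simp only [Function.mem_support, ne_eq, ite_eq_right_iff, not_forall] at hm
    obtain ⟨hnm, -⟩ := hm
    exact ⟨m - n, by show n + (m - n) = m; omega⟩

private lemma tsum_triangle (F : ℕ → ℕ → ℝ≥0∞) :
    ∑' n, ∑' k, F n (n + k) = ∑' m, ∑ i ∈ Finset.range (m + 1), F i m := by
  calc ∑' n, ∑' k, F n (n + k) = ∑' n, ∑' m, if n ≤ m then F n m else 0 :=
        tsum_congr fun n => tsum_tail (F n) n
    _ = ∑' m, ∑' n, if n ≤ m then F n m else 0 := ENNReal.tsum_comm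
    _ = ∑' m, ∑ i ∈ Finset.range (m + 1), F i m := by
        refine tsum_congr fun m => ?_
        rw [tsum_eq_sum (s := Finset.range (m + 1)) (fun n hn => if_neg (by simp at hn; omega))]
        exact Finset.sum_congr rfl fun n hn => if_pos (by simp at hn; omega)

private lemma rpow_sum_le {θ : ℝ} (hθ : 0 < θ) (hθ1 : θ ≤ 1) (s : Finset ℕ) (g : ℕ → ℝ≥0∞) :
    (∑ i ∈ s, g i) ^ θ ≤ ∑ i ∈ s, g i ^ θ := by
  induction s using Finset.cons_induction with
  | empty => simp [ENNReal.zero_rpow_of_pos hθ]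
  | cons i s his ih =>
    rw [Finset.sum_cons, Finset.sum_cons]
    exact le_trans (ENNReal.rpow_add_le_add_rpow _ _ hθ.le hθ1) (by gcongr)

private lemma rpow_tsum_le {θ : ℝ} (hθ : 0 < θ) (hθ1 : θ ≤ 1) (g : ℕ → ℝ≥0∞) :
    (∑' k, g k) ^ θ ≤ ∑' k, g k ^ θ := by
  rw [← ENNReal.le_rpow_inv_iff hθ, ENNReal.tsum_eq_iSup_sum]
  refine iSup_le fun s => ?_
  rw [ENNReal.le_rpow_inv_iff hθ]
  exact (rpow_sum_le hθ hθ1 s g).trans (ENNReal.sum_le_tsum s)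

private lemma pow_rpow_comm (x : ℝ≥0∞) (m : ℕ) (y : ℝ) : (x ^ m) ^ y = (x ^ y) ^ m := by
  rw [← ENNReal.rpow_natCast x m, ← ENNReal.rpow_mul, mul_comm, ENNReal.rpow_mul,
    ENNReal.rpow_natCast]

/-- Discrete Hardy-type inequality (Lemma 1(a)): if the partial sums of `a`
are dominated by `C * a n`, then
`∑ₙ aₙ (∑_{k≥n} b_k)^θ ≤ C' ∑ₙ aₙ bₙ^θ` (sums in `[0,∞]`). -/
theorem stmt_0 (θ : ℝ) (hθ : 0 < θ) (a b : ℕ → ℝ≥0∞)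
    (ha : ∀ k, 0 < a k) (ha' : ∀ k, a k ≠ ⊤)
    (hb : ∀ k, 0 < b k) (hb' : ∀ k, b k ≠ ⊤)
    (C : ℝ≥0∞) (hC : 0 < C) (hCtop : C ≠ ⊤)
    (hHardy : ∀ n, ∑ k ∈ Finset.range (n + 1), a k ≤ C * a n) :
    ∃ C' : ℝ≥0∞, 0 < C' ∧ C' ≠ ⊤ ∧
      ∑' n, a n * (∑' k, b (n + k)) ^ θ ≤ C' * ∑' n, a n * (b n) ^ θ := by
  set A : ℕ → ℝ≥0∞ := fun n => ∑ k ∈ Finset.range (n + 1), a k with hA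
  have hAtop : ∀ n, A n ≠ ⊤ := fun n =>
    ne_top_of_le_ne_top (ENNReal.mul_ne_top hCtop (ha' n)) (hHardy n)
  have haA : ∀ n, a n ≤ A n := fun n =>
    Finset.single_le_sum (f := a) (fun i _ => zero_le) (Finset.self_mem_range_succ n)
  have hC1 : 1 < C := by
    by_contra hle
    push_neg at hle
    have h1 := (hHardy 1).trans (mul_le_of_le_one_left zero_le hle)
    rw [Finset.sum_range_succ, Finset.sum_range_one] at h1
    have : a 0 ≤ 0 := by
      have := ENNReal.le_of_add_le_add_right (ha' 1) (by simpa using h1 : a 0 + a 1 ≤ 0 + a 1)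
      simpa using this
    exact absurd this (by simpa using (ha 0).ne')
  have hCinv1 : C⁻¹ < 1 := by
    rw [ENNReal.inv_lt_one]; exact hC1
  set r : ℝ≥0∞ := 1 - C⁻¹ with hrdef
  have hr0 : 0 < r := tsub_pos_of_lt hCinv1
  have hr1 : r < 1 := ENNReal.sub_lt_self ENNReal.one_ne_top one_ne_zero
    (by simpa using (ENNReal.inv_pos.2 hCtop).ne')
  have hrtop : r ≠ ⊤ := ne_top_of_le_ne_top ENNReal.one_ne_top tsub_le_self
  have hstep : ∀ n, A n ≤ r * A (n + 1) := by
    intro n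
    have hinv : C⁻¹ * A (n + 1) ≤ a (n + 1) := by
      calc C⁻¹ * A (n + 1) ≤ C⁻¹ * (C * a (n + 1)) := by gcongr; exact hHardy (n + 1)
        _ = a (n + 1) := by rw [← mul_assoc, ENNReal.inv_mul_cancel hC.ne' hCtop, one_mul]
    have hsplit : A (n + 1) = r * A (n + 1) + C⁻¹ * A (n + 1) := by
      rw [← add_mul, hrdef, tsub_add_cancel_of_le hCinv1.le, one_mul]
    have h2 : A n + C⁻¹ * A (n + 1) ≤ r * A (n + 1) + C⁻¹ * A (n + 1) := by
      calc A n + C⁻¹ * A (n + 1) ≤ A n + a (n + 1) := by gcongr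
        _ = A (n + 1) := (Finset.sum_range_succ a (n + 1)).symm
        _ = _ := hsplit
    exact ENNReal.le_of_add_le_add_right
      (ENNReal.mul_ne_top (ne_top_of_le_ne_top ENNReal.one_ne_top hCinv1.le) (hAtop (n + 1))) h2
  have hAgeo : ∀ m j, A m ≤ r ^ j * A (m + j) := by
    intro m j
    induction j with
    | zero => simp
    | succ j ih =>
      calc A m ≤ r ^ j * A (m + j) := ih
        _ ≤ r ^ j * (r * A (m + j + 1)) := by gcongr; exact hstep _
        _ = r ^ (j + 1) * A (m + (j + 1)) := by ring_nf
  have hkey : ∀ m n, m ≤ n → a m ≤ C * (r ^ (n - m) * a n) := by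
    intro m n hmn
    calc a m ≤ A m := haA m
      _ ≤ r ^ (n - m) * A n := by
          have := hAgeo m (n - m); rwa [Nat.add_sub_cancel' hmn] at this
      _ ≤ r ^ (n - m) * (C * a n) := by gcongr; exact hHardy n
      _ = C * (r ^ (n - m) * a n) := by ring
  rcases le_or_gt θ 1 with hθ1 | hθ1
  · refine ⟨C, hC, hCtop, ?_⟩
    calc ∑' n, a n * (∑' k, b (n + k)) ^ θ
        ≤ ∑' n, a n * ∑' k, (b (n + k)) ^ θ :=
          ENNReal.tsum_le_tsum fun n => mul_le_mul_right (rpow_tsum_le hθ hθ1 _) _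
      _ = ∑' n, ∑' k, a n * (b (n + k)) ^ θ := tsum_congr fun n => ENNReal.tsum_mul_left.symm
      _ = ∑' m, ∑ i ∈ Finset.range (m + 1), a i * (b m) ^ θ :=
          tsum_triangle (fun n m => a n * (b m) ^ θ)
      _ = ∑' m, A m * (b m) ^ θ := tsum_congr fun m => by rw [← Finset.sum_mul]
      _ ≤ ∑' m, C * a m * (b m) ^ θ :=
          ENNReal.tsum_le_tsum fun m => mul_le_mul_left (hHardy m) _
      _ = C * ∑' m, a m * (b m) ^ θ := by simp_rw [mul_assoc]; exact ENNReal.tsum_mul_left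
  · -- θ > 1 : Hölder with geometric weights
    have hθ1' : (0:ℝ) < θ - 1 := by linarith
    set q : ℝ := θ / (θ - 1) with hqdef
    have hpq : θ.HolderConjugate q := (Real.holderConjugate_iff_eq_conjExponent hθ1).2 rfl
    have hq0 : 0 < q := hpq.symm.pos
    have hqθ : q * (θ - 1) = θ := by rw [hqdef]; field_simp
    set u : ℝ≥0∞ := r ^ (2⁻¹ : ℝ) with hu
    have hu0 : u ≠ 0 := by
      simp [hu, ENNReal.rpow_eq_zero_iff, hr0.ne', hrtop]
    have hut : u ≠ ⊤ := by
      simp [hu, ENNReal.rpow_eq_top_iff, hr0.ne', hrtop]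
    have hu1 : u < 1 := ENNReal.rpow_lt_one hr1 (by norm_num)
    have huu : u * u = r := by
      rw [hu, ← ENNReal.rpow_add _ _ hr0.ne' hrtop]; norm_num
    set s : ℝ≥0∞ := u ^ (θ⁻¹ : ℝ) with hs
    have hs0 : s ≠ 0 := by simp [hs, ENNReal.rpow_eq_zero_iff, hu0, hut]
    have hst : s ≠ ⊤ := by simp [hs, ENNReal.rpow_eq_top_iff, hu0, hut]
    have hsθ : s ^ (θ : ℝ) = u := by
      rw [hs, ← ENNReal.rpow_mul, inv_mul_cancel₀ hθ.ne', ENNReal.rpow_one]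
    set v : ℝ≥0∞ := s ^ (q : ℝ) with hv
    have hslt1 : s < 1 := by
      rw [hs]; exact ENNReal.rpow_lt_one hu1 (by positivity)
    have hv1 : v < 1 := by
      rw [hv]; exact ENNReal.rpow_lt_one hslt1 hq0
    have hv0 : v ≠ 0 := by simp [hv, ENNReal.rpow_eq_zero_iff, hs0, hst]
    have hvθ : v ^ (θ - 1 : ℝ) = u := by
      rw [hv, ← ENNReal.rpow_mul, hqθ, hsθ]
    have hc1pos : (0:ℝ≥0∞) < (1 - v)⁻¹ ^ (θ - 1 : ℝ) :=
      ENNReal.rpow_pos (ENNReal.inv_pos.2 (ne_top_of_le_ne_top ENNReal.one_ne_top tsub_le_self))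
        (ENNReal.inv_ne_top.2 (tsub_pos_of_lt hv1).ne')
    have hc1top : (1 - v)⁻¹ ^ (θ - 1 : ℝ) ≠ ⊤ :=
      ENNReal.rpow_ne_top_of_nonneg hθ1'.le (ENNReal.inv_ne_top.2 (tsub_pos_of_lt hv1).ne')
    set c1 : ℝ≥0∞ := (1 - v)⁻¹ ^ (θ - 1 : ℝ) with hc1
    set c2 : ℝ≥0∞ := (1 - u)⁻¹ with hc2
    have hc2pos : 0 < c2 :=
      ENNReal.inv_pos.2 (ne_top_of_le_ne_top ENNReal.one_ne_top tsub_le_self)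
    have hc2top : c2 ≠ ⊤ := ENNReal.inv_ne_top.2 (tsub_pos_of_lt hu1).ne'
    have hsm0 : ∀ m : ℕ, (s ^ m : ℝ≥0∞) ≠ 0 := fun m => pow_ne_zero m hs0
    have hsmt : ∀ m : ℕ, (s ^ m : ℝ≥0∞) ≠ ⊤ := fun m => ENNReal.pow_ne_top hst
    have hum0 : ∀ m : ℕ, (u ^ m : ℝ≥0∞) ≠ 0 := fun m => pow_ne_zero m hu0
    have humt : ∀ m : ℕ, (u ^ m : ℝ≥0∞) ≠ ⊤ := fun m => ENNReal.pow_ne_top hut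
    -- the Hölder bound on the tail
    have hT : ∀ n, (∑' k, b (n + k)) ^ θ ≤
        c1 * (u ^ n * ∑' k, (b (n + k)) ^ θ * (u ^ (n + k))⁻¹) := by
      intro n
      have h1 : ∑' k, b (n + k) ≤
          (∑' k, (b (n + k)) ^ θ * (u ^ (n + k))⁻¹) ^ (1 / θ) *
            (v ^ n * (1 - v)⁻¹) ^ (1 / q) := by
        have := tsum_holder hpq (fun k => b (n + k) * (s ^ (n + k))⁻¹)
          (fun k => s ^ (n + k))
        calc ∑' k, b (n + k)
            = ∑' k, (b (n + k) * (s ^ (n + k))⁻¹) * s ^ (n + k) := tsum_congr fun k => by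
              rw [mul_assoc, ENNReal.inv_mul_cancel (hsm0 _) (hsmt _), mul_one]
          _ ≤ _ := this
          _ = _ := by
              congr 1
              · congr 1
                refine tsum_congr fun k => ?_
                rw [ENNReal.mul_rpow_of_nonneg _ _ hθ.le, ENNReal.inv_rpow,
                  pow_rpow_comm, hsθ]
              · congr 1
                have : ∀ k : ℕ, ((s ^ (n + k) : ℝ≥0∞)) ^ (q:ℝ) = v ^ n * v ^ k := fun k => by
                  rw [pow_rpow_comm, ← hv, pow_add]
                simp_rw [this]
                rw [ENNReal.tsum_mul_left, ENNReal.tsum_geometric]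
      have h2 := ENNReal.rpow_le_rpow h1 hθ.le
      calc (∑' k, b (n + k)) ^ θ ≤ _ := h2
        _ = (∑' k, (b (n + k)) ^ θ * (u ^ (n + k))⁻¹) *
              ((v ^ n) ^ (θ - 1 : ℝ) * ((1 - v)⁻¹) ^ (θ - 1 : ℝ)) := by
            have hqθ' : 1 / q * θ = θ - 1 := by
              rw [hqdef]; field_simp
            rw [ENNReal.mul_rpow_of_nonneg _ _ hθ.le, ← ENNReal.rpow_mul,
              one_div, inv_mul_cancel₀ hθ.ne', ENNReal.rpow_one,
              ← ENNReal.rpow_mul, hqθ', ENNReal.mul_rpow_of_nonneg _ _ hθ1'.le]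
        _ = c1 * (u ^ n * ∑' k, (b (n + k)) ^ θ * (u ^ (n + k))⁻¹) := by
            rw [pow_rpow_comm, hvθ, hc1]; ring
    refine ⟨c1 * (c2 * C), ENNReal.mul_pos hc1pos.ne' (ENNReal.mul_pos hc2pos.ne' hC.ne').ne',
      ENNReal.mul_ne_top hc1top (ENNReal.mul_ne_top hc2top hCtop), ?_⟩
    calc ∑' n, a n * (∑' k, b (n + k)) ^ θ
        ≤ ∑' n, a n * (c1 * (u ^ n * ∑' k, (b (n + k)) ^ θ * (u ^ (n + k))⁻¹)) :=
          ENNReal.tsum_le_tsum fun n => mul_le_mul_right (hT n) _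
      _ = c1 * ∑' n, ∑' k, (a n * u ^ n) * ((b (n + k)) ^ θ * (u ^ (n + k))⁻¹) := by
          rw [← ENNReal.tsum_mul_left]
          refine tsum_congr fun n => ?_
          rw [ENNReal.tsum_mul_left (a := a n * u ^ n)]
          ring
      _ = c1 * ∑' m, ∑ i ∈ Finset.range (m + 1), (a i * u ^ i) * ((b m) ^ θ * (u ^ m)⁻¹) := by
          rw [tsum_triangle (fun n m => (a n * u ^ n) * ((b m) ^ θ * (u ^ m)⁻¹))]
      _ = c1 * ∑' m, (∑ i ∈ Finset.range (m + 1), a i * u ^ i) * ((b m) ^ θ * (u ^ m)⁻¹) := by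
          simp_rw [Finset.sum_mul]
      _ ≤ c1 * ∑' m, (c2 * (C * (a m * u ^ m))) * ((b m) ^ θ * (u ^ m)⁻¹) := by
          gcongr c1 * ∑' m, ?_ * ((b m) ^ θ * (u ^ m)⁻¹) with m
          calc ∑ i ∈ Finset.range (m + 1), a i * u ^ i
              ≤ ∑ i ∈ Finset.range (m + 1), C * (a m * u ^ m) * u ^ (m - i) := by
                refine Finset.sum_le_sum fun i hi => ?_
                have him : i ≤ m := by simp at hi; omega
                calc a i * u ^ i ≤ C * (r ^ (m - i) * a m) * u ^ i :=
                      mul_le_mul_left (hkey i m him) _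
                  _ = C * (a m * u ^ m) * u ^ (m - i) := by
                      rw [← huu, mul_pow]
                      have : u ^ (m - i) * u ^ i = u ^ m := by
                        rw [← pow_add]; congr 1; omega
                      calc C * ((u ^ (m-i) * u ^ (m-i)) * a m) * u ^ i
                          = C * (a m * (u ^ (m-i) * u ^ i)) * u ^ (m - i) := by ring
                        _ = _ := by rw [this]
              _ = C * (a m * u ^ m) * ∑ i ∈ Finset.range (m + 1), u ^ (m - i) := by
                rw [← Finset.mul_sum]
              _ ≤ c2 * (C * (a m * u ^ m)) := by
                rw [mul_comm]
                refine mul_le_mul_left ?_ _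
                have hre : (∑ i ∈ Finset.range (m + 1), u ^ (m - i))
                    = ∑ i ∈ Finset.range (m + 1), u ^ i := by
                  rw [← Finset.sum_range_reflect]
                  exact Finset.sum_congr rfl fun i hi => by
                    congr 1; simp at hi; omega
                calc (∑ i ∈ Finset.range (m + 1), u ^ (m - i))
                    = ∑ i ∈ Finset.range (m + 1), u ^ i := hre
                  _ ≤ ∑' i, u ^ i := ENNReal.sum_le_tsum _
                  _ = c2 := by rw [ENNReal.tsum_geometric, hc2]
      _ = c1 * ∑' m, c2 * C * (a m * (b m) ^ θ) := by
          congr 1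
          refine tsum_congr fun m => ?_
          calc c2 * (C * (a m * u ^ m)) * ((b m) ^ θ * (u ^ m)⁻¹)
              = c2 * C * (a m * (b m) ^ θ) * (u ^ m * (u ^ m)⁻¹) := by ring
            _ = c2 * C * (a m * (b m) ^ θ) := by
                rw [ENNReal.mul_inv_cancel (hum0 m) (humt m), mul_one]
      _ = c1 * (c2 * C) * ∑' m, a m * (b m) ^ θ := by
          rw [ENNReal.tsum_mul_left]; ring
end

section
/- Let 0 < θ < ∞ and let (a_k), (b_k) be sequences of positive reals. If there exists C > 0 such that for all n, ∑_{k=n}^{∞} a_k ≤ C · a_n, then there exists C' > 0 (depending only on C and θ) such that ∑_{n=0}^{∞} a_n (∑_{k=0}^{n} b_k)^θ ≤ C' · ∑_{n=0}^{∞} a_n b_n^θ. -/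
open scoped ENNReal

/-- Subadditivity of `x ↦ x ^ θ` for `θ ∈ (0,1]` over finite sums. -/
lemma aux_rpow_sum_le {θ : ℝ} (hθ0 : 0 < θ) (hθ1 : θ ≤ 1) (s : Finset ℕ) (f : ℕ → ℝ≥0∞) :
    (∑ k ∈ s, f k) ^ θ ≤ ∑ k ∈ s, f k ^ θ := by
  induction s using Finset.cons_induction with
  | empty => simp [ENNReal.zero_rpow_of_pos hθ0]
  | cons i s hi ih =>
    rw [Finset.sum_cons, Finset.sum_cons]
    calc (f i + ∑ k ∈ s, f k) ^ θ
        ≤ f i ^ θ + (∑ k ∈ s, f k) ^ θ :=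
          ENNReal.rpow_add_le_add_rpow _ _ hθ0.le hθ1
      _ ≤ f i ^ θ + ∑ k ∈ s, f k ^ θ := add_le_add_right ih _

/-- Interchange a triangular double sum in `ℝ≥0∞`. -/
lemma aux_swap (F : ℕ → ℕ → ℝ≥0∞) :
    ∑' n, ∑ k ∈ Finset.range (n + 1), F n k = ∑' k, ∑' j, F (k + j) k := by
  have h1 : ∀ n, ∑ k ∈ Finset.range (n + 1), F n k
      = ∑' k, if k ≤ n then F n k else 0 := by
    intro n
    rw [tsum_eq_sum (s := Finset.range (n + 1))
      (fun k hk => by simp [Nat.lt_succ_iff.not.mp (Finset.mem_range.not.mp hk)])]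
    exact Finset.sum_congr rfl fun k hk => by
      simp [Nat.lt_succ_iff.mp (Finset.mem_range.mp hk)]
  calc ∑' n, ∑ k ∈ Finset.range (n + 1), F n k
      = ∑' n, ∑' k, if k ≤ n then F n k else 0 := tsum_congr h1
    _ = ∑' k, ∑' n, if k ≤ n then F n k else 0 := ENNReal.tsum_comm
    _ = ∑' k, ∑' j, F (k + j) k := by
        refine tsum_congr fun k => ?_
        have hinj : Function.Injective (fun j : ℕ => k + j) := add_right_injective k
        have hsupp : Function.support (fun n => if k ≤ n then F n k else 0)
            ⊆ Set.range (fun j : ℕ => k + j) := by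
          intro n hn
          by_cases h : k ≤ n
          · exact ⟨n - k, by simp; omega⟩
          · simp [h] at hn
        rw [← Function.Injective.tsum_eq hinj hsupp]
        exact tsum_congr fun j => by simp

/-- Discrete Hardy-type inequality, dual form (Lemma 1(b)): if the tails of `a`
are dominated by `C * a n`, then
`∑ₙ aₙ (∑_{k≤n} b_k)^θ ≤ C' ∑ₙ aₙ bₙ^θ` (sums in `[0,∞]`). -/
theorem stmt_1 (θ : ℝ) (hθ : 0 < θ) (a b : ℕ → ℝ≥0∞)
    (ha : ∀ k, 0 < a k) (ha' : ∀ k, a k ≠ ⊤)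
    (hb : ∀ k, 0 < b k) (hb' : ∀ k, b k ≠ ⊤)
    (C : ℝ≥0∞) (hC : 0 < C) (hCtop : C ≠ ⊤)
    (hHardy : ∀ n, ∑' k, a (n + k) ≤ C * a n) :
    ∃ C' : ℝ≥0∞, 0 < C' ∧ C' ≠ ⊤ ∧
      ∑' n, a n * (∑ k ∈ Finset.range (n + 1), b k) ^ θ ≤ C' * ∑' n, a n * (b n) ^ θ := by
  set A : ℕ → ℝ≥0∞ := fun n => ∑' k, a (n + k) with hAdef
  have hAa : ∀ n, a n ≤ A n := fun n => by
    simpa using ENNReal.le_tsum (f := fun k => a (n + k)) 0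
  have hAtop : ∀ n, A n ≠ ⊤ := fun n =>
    ne_top_of_le_ne_top (ENNReal.mul_ne_top hCtop (ha' n)) (hHardy n)
  have hArec : ∀ n, A n = a n + A (n + 1) := by
    intro n
    have h := tsum_eq_zero_add' (f := fun k => a (n + k)) ENNReal.summable
    calc A n = ∑' k, a (n + k) := rfl
      _ = a (n + 0) + ∑' k, a (n + (k + 1)) := h
      _ = a n + A (n + 1) := by
          rw [Nat.add_zero]
          congr 1
          exact tsum_congr fun k => congrArg a (by omega)
  by_cases hθ1 : θ ≤ 1
  -- Case θ ≤ 1: subadditivity of x ↦ x^θ suffices, with C' = C.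
  · refine ⟨C, hC, hCtop, ?_⟩
    calc ∑' n, a n * (∑ k ∈ Finset.range (n + 1), b k) ^ θ
        ≤ ∑' n, a n * ∑ k ∈ Finset.range (n + 1), b k ^ θ := by
          exact ENNReal.tsum_le_tsum fun n =>
            mul_le_mul_right (aux_rpow_sum_le hθ hθ1 _ b) _
      _ = ∑' n, ∑ k ∈ Finset.range (n + 1), a n * b k ^ θ := by
          exact tsum_congr fun n => Finset.mul_sum _ _ _
      _ = ∑' k, ∑' j, a (k + j) * b k ^ θ := aux_swap _
      _ = ∑' k, A k * b k ^ θ := by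
          exact tsum_congr fun k => ENNReal.tsum_mul_right
      _ ≤ ∑' k, (C * a k) * b k ^ θ := by
          exact ENNReal.tsum_le_tsum fun k => mul_le_mul_left (hHardy k) _
      _ = C * ∑' k, a k * b k ^ θ := by
          simp_rw [mul_assoc]; exact ENNReal.tsum_mul_left
  -- Case θ > 1: geometric decay of tails + weighted Hölder.
  · push_neg at hθ1
    -- First, C > 1.
    have hC1 : 1 < C := by
      by_contra h
      push_neg at h
      have h1 : a 0 + a 1 ≤ A 0 := by
        rw [hArec 0]
        exact add_le_add_right (hAa 1) _
      have h2 : A 0 ≤ C * a 0 := hHardy 0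
      have h3 : C * a 0 ≤ a 0 := by
        calc C * a 0 ≤ 1 * a 0 := mul_le_mul_left h _
          _ = a 0 := one_mul _
      have h4 : a 0 + a 1 ≤ a 0 := le_trans h1 (le_trans h2 h3)
      have h5 : a 0 < a 0 + a 1 := ENNReal.lt_add_right (ha' 0) (ha 1).ne'
      exact absurd (lt_of_lt_of_le h5 h4) (lt_irrefl _)
    set lam : ℝ≥0∞ := 1 - C⁻¹ with hlamdef
    have hCinv0 : C⁻¹ ≠ 0 := ENNReal.inv_ne_zero.mpr hCtop
    have hCinvlt1 : C⁻¹ < 1 := ENNReal.inv_lt_one.mpr hC1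
    have hlam0 : 0 < lam := tsub_pos_of_lt hCinvlt1
    have hlam1 : lam < 1 := ENNReal.sub_lt_self ENNReal.one_ne_top one_ne_zero hCinv0
    have hlamtop : lam ≠ ⊤ := ne_top_of_le_ne_top ENNReal.one_ne_top tsub_le_self
    -- Tail decay: A (n+1) ≤ lam * A n
    have hstep : ∀ n, A (n + 1) ≤ lam * A n := by
      intro n
      have h1 : C⁻¹ * A n ≤ a n := by
        calc C⁻¹ * A n ≤ C⁻¹ * (C * a n) := mul_le_mul_right (hHardy n) _
          _ = (C⁻¹ * C) * a n := (mul_assoc _ _ _).symm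
          _ = a n := by rw [ENNReal.inv_mul_cancel hC.ne' hCtop, one_mul]
      have h2 : A (n + 1) + C⁻¹ * A n ≤ lam * A n + C⁻¹ * A n := by
        calc A (n + 1) + C⁻¹ * A n ≤ A (n + 1) + a n := add_le_add_right h1 _
          _ = a n + A (n + 1) := add_comm _ _
          _ = A n := (hArec n).symm
          _ = (lam + C⁻¹) * A n := by
              rw [hlamdef, tsub_add_cancel_of_le hCinvlt1.le, one_mul]
          _ = lam * A n + C⁻¹ * A n := add_mul _ _ _
      exact ENNReal.le_of_add_le_add_right
        (ENNReal.mul_ne_top (ne_top_of_lt hCinvlt1) (hAtop n)) h2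
    -- Geometric decay: a (k + j) ≤ C * (lam ^ j * a k)
    have hgeoA : ∀ k j, A (k + j) ≤ lam ^ j * A k := by
      intro k j
      induction j with
      | zero => simp
      | succ j ih =>
        calc A (k + (j + 1)) = A ((k + j) + 1) := by ring_nf
          _ ≤ lam * A (k + j) := hstep _
          _ ≤ lam * (lam ^ j * A k) := mul_le_mul_right ih _
          _ = lam ^ (j + 1) * A k := by ring
    have hgeo : ∀ k j, a (k + j) ≤ C * (lam ^ j * a k) := by
      intro k j
      calc a (k + j) ≤ A (k + j) := hAa _
        _ ≤ lam ^ j * A k := hgeoA k j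
        _ ≤ lam ^ j * (C * a k) := mul_le_mul_right (hHardy k) _
        _ = C * (lam ^ j * a k) := by ring
    -- Parameters
    have hθ1' : θ - 1 ≠ 0 := sub_ne_zero_of_ne hθ1.ne'
    set e : ℝ := (2 * (θ - 1))⁻¹ with hedef
    have he0 : 0 < e := by
      rw [hedef]
      have : (0:ℝ) < θ - 1 := by linarith
      positivity
    set μ : ℝ≥0∞ := lam ^ e with hμdef
    have hμ0 : 0 < μ := ENNReal.rpow_pos hlam0 hlamtop
    have hμ1 : μ < 1 := ENNReal.rpow_lt_one hlam1 he0
    have hμtop : μ ≠ ⊤ := ne_top_of_lt (lt_of_lt_of_le hμ1 le_top)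
    set M : ℝ≥0∞ := (1 - μ)⁻¹ with hMdef
    have hM0 : 0 < M := ENNReal.inv_pos.mpr (ne_top_of_le_ne_top ENNReal.one_ne_top tsub_le_self)
    have hMtop : M ≠ ⊤ := by
      rw [hMdef, Ne, ENNReal.inv_eq_top]
      exact (tsub_pos_of_lt hμ1).ne'
    set ρ : ℝ≥0∞ := lam ^ (1 / 2 : ℝ) with hρdef
    have hρ1 : ρ < 1 := ENNReal.rpow_lt_one hlam1 (by norm_num)
    set R : ℝ≥0∞ := (1 - ρ)⁻¹ with hRdef
    have hR0 : 0 < R := ENNReal.inv_pos.mpr (ne_top_of_le_ne_top ENNReal.one_ne_top tsub_le_self)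
    have hRtop : R ≠ ⊤ := by
      rw [hRdef, Ne, ENNReal.inv_eq_top]
      exact (tsub_pos_of_lt hρ1).ne'
    -- geometric series for ρ
    have hRsum : ∑' j : ℕ, ρ ^ j = R := ENNReal.tsum_geometric ρ
    -- combination of the two geometric factors
    have hcomb : ∀ j : ℕ, lam ^ j * (μ ^ j) ^ (1 - θ) = ρ ^ j := by
      intro j
      have h1 : μ ^ j = lam ^ (e * j) := by
        rw [hμdef, ENNReal.rpow_mul, ENNReal.rpow_natCast]
      have h2 : (μ ^ j) ^ (1 - θ) = lam ^ (e * j * (1 - θ)) := by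
        rw [h1, ← ENNReal.rpow_mul]
      have h3 : lam ^ (j : ℕ) = lam ^ (j : ℝ) := (ENNReal.rpow_natCast lam j).symm
      have h4 : ρ ^ (j : ℕ) = lam ^ ((1 / 2 : ℝ) * j) := by
        rw [hρdef, ← ENNReal.rpow_natCast (lam ^ (1 / 2 : ℝ)) j, ← ENNReal.rpow_mul]
      rw [h2, h3, h4, ← ENNReal.rpow_add _ _ hlam0.ne' hlamtop]
      congr 1
      rw [hedef]
      field_simp
      ring
    -- Hölder step: pointwise bound on (∑_{k ≤ n} b k)^θ
    have hHolder : ∀ n, (∑ k ∈ Finset.range (n + 1), b k) ^ θ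
        ≤ M ^ (θ - 1) * ∑ k ∈ Finset.range (n + 1), (μ ^ (n - k)) ^ (1 - θ) * b k ^ θ := by
      intro n
      set w : ℕ → ℝ≥0∞ := fun k => μ ^ (n - k) with hwdef
      have hw0 : ∀ k, w k ≠ 0 := fun k => pow_ne_zero _ hμ0.ne'
      have hwtop : ∀ k, w k ≠ ⊤ := fun k => ENNReal.pow_ne_top hμtop
      set f : ℕ → ℝ≥0∞ := fun k => (w k)⁻¹ * b k with hfdef
      have hwf : ∀ k, w k * f k = b k := by
        intro k
        rw [hfdef]
        simp only
        rw [← mul_assoc, ENNReal.mul_inv_cancel (hw0 k) (hwtop k), one_mul]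
      have hwfθ : ∀ k, w k * f k ^ θ = (w k) ^ (1 - θ) * b k ^ θ := by
        intro k
        rw [hfdef]
        simp only
        rw [ENNReal.mul_rpow_of_nonneg _ _ hθ.le, ENNReal.inv_rpow,
          show (1:ℝ) - θ = 1 + (-θ) by ring, ENNReal.rpow_add _ _ (hw0 k) (hwtop k),
          ENNReal.rpow_one, ENNReal.rpow_neg]
        ring
      have hwsum : ∑ k ∈ Finset.range (n + 1), w k ≤ M := by
        have h1 : ∑ k ∈ Finset.range (n + 1), w k = ∑ j ∈ Finset.range (n + 1), μ ^ j := by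
          rw [← Finset.sum_range_reflect (fun j => μ ^ j) (n + 1)]
          exact Finset.sum_congr rfl fun k hk => by
            rw [show n + 1 - 1 - k = n - k by omega]
        rw [h1, hMdef, ← ENNReal.tsum_geometric μ]
        exact ENNReal.sum_le_tsum _
      have hHold := ENNReal.inner_le_weight_mul_Lp_of_nonneg (Finset.range (n + 1))
        hθ1.le w f
      rw [Finset.sum_congr rfl (fun k _ => hwf k)] at hHold
      -- hHold : ∑ b ≤ (∑ w)^(1-θ⁻¹) * (∑ w f^θ)^θ⁻¹
      have hexp0 : (0 : ℝ) ≤ 1 - θ⁻¹ := by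
        rw [sub_nonneg]
        exact inv_le_one_of_one_le₀ hθ1.le
      have hB : ∑ k ∈ Finset.range (n + 1), b k
          ≤ M ^ (1 - θ⁻¹) *
            (∑ k ∈ Finset.range (n + 1), (w k) ^ (1 - θ) * b k ^ θ) ^ θ⁻¹ := by
        refine le_trans hHold (mul_le_mul ?_ ?_ zero_le zero_le)
        · exact ENNReal.rpow_le_rpow hwsum hexp0
        · refine ENNReal.rpow_le_rpow (le_of_eq ?_) (by positivity)
          exact Finset.sum_congr rfl fun k _ => hwfθ k
      calc (∑ k ∈ Finset.range (n + 1), b k) ^ θ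
          ≤ (M ^ (1 - θ⁻¹) *
              (∑ k ∈ Finset.range (n + 1), (w k) ^ (1 - θ) * b k ^ θ) ^ θ⁻¹) ^ θ :=
            ENNReal.rpow_le_rpow hB hθ.le
        _ = (M ^ (1 - θ⁻¹)) ^ θ *
              ((∑ k ∈ Finset.range (n + 1), (w k) ^ (1 - θ) * b k ^ θ) ^ θ⁻¹) ^ θ :=
            ENNReal.mul_rpow_of_nonneg _ _ hθ.le
        _ = M ^ (θ - 1) * ∑ k ∈ Finset.range (n + 1), (w k) ^ (1 - θ) * b k ^ θ := by
            rw [ENNReal.rpow_inv_rpow hθ.ne' , ← ENNReal.rpow_mul]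
            congr 2
            field_simp
    -- Assemble
    refine ⟨M ^ (θ - 1) * (C * R), ?_, ?_, ?_⟩
    · exact ENNReal.mul_pos (ENNReal.rpow_pos hM0 hMtop).ne'
        (ENNReal.mul_pos hC.ne' hR0.ne').ne'
    · exact ENNReal.mul_ne_top (ENNReal.rpow_ne_top_of_nonneg (by linarith) hMtop)
        (ENNReal.mul_ne_top hCtop hRtop)
    calc ∑' n, a n * (∑ k ∈ Finset.range (n + 1), b k) ^ θ
        ≤ ∑' n, a n *
            (M ^ (θ - 1) * ∑ k ∈ Finset.range (n + 1), (μ ^ (n - k)) ^ (1 - θ) * b k ^ θ) :=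
          ENNReal.tsum_le_tsum fun n => mul_le_mul_right (hHolder n) _
      _ = M ^ (θ - 1) *
            ∑' n, ∑ k ∈ Finset.range (n + 1), a n * ((μ ^ (n - k)) ^ (1 - θ) * b k ^ θ) := by
          rw [← ENNReal.tsum_mul_left]
          refine tsum_congr fun n => ?_
          rw [← Finset.mul_sum]
          ring
      _ = M ^ (θ - 1) *
            ∑' k, ∑' j, a (k + j) * ((μ ^ ((k + j) - k)) ^ (1 - θ) * b k ^ θ) := by
          rw [aux_swap (fun n k => a n * ((μ ^ (n - k)) ^ (1 - θ) * b k ^ θ))]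
      _ ≤ M ^ (θ - 1) * ∑' k, ∑' j, (C * (a k * b k ^ θ)) * ρ ^ j := by
          refine mul_le_mul_right (ENNReal.tsum_le_tsum fun k =>
            ENNReal.tsum_le_tsum fun j => ?_) _
          have hjk : (k + j) - k = j := by omega
          rw [hjk]
          calc a (k + j) * ((μ ^ j) ^ (1 - θ) * b k ^ θ)
              ≤ (C * (lam ^ j * a k)) * ((μ ^ j) ^ (1 - θ) * b k ^ θ) :=
                mul_le_mul_left (hgeo k j) _
            _ = (C * (a k * b k ^ θ)) * (lam ^ j * (μ ^ j) ^ (1 - θ)) := by ring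
            _ = (C * (a k * b k ^ θ)) * ρ ^ j := by rw [hcomb j]
      _ = M ^ (θ - 1) * (C * R) * ∑' k, a k * b k ^ θ := by
          rw [mul_assoc (M ^ (θ - 1))]
          congr 1
          calc ∑' k, ∑' j, (C * (a k * b k ^ θ)) * ρ ^ j
              = ∑' k, (C * (a k * b k ^ θ)) * R := by
                refine tsum_congr fun k => ?_
                rw [ENNReal.tsum_mul_left, hRsum]
            _ = C * R * ∑' k, a k * b k ^ θ := by
                rw [← ENNReal.tsum_mul_left]
                exact tsum_congr fun k => by ring
end

section
/- Let ψ : [0,1] → ℝ be a continuous, concave, nondecreasing function with ψ(0) = 0, and suppose the lower dilation index α_ψ := liminf_{t→0⁺} ψ(2t)/ψ(t) satisfies α_ψ > 1. Then for every q > 0 there is a constant C such that for all x ∈ (0,1], ∫_0^x ψ(t)^q / t dt ≤ C · ψ(x)^q. -/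
open Filter MeasureTheory Set

set_option maxHeartbeats 1000000 in
/-- Lemma 2, first relation: if `ψ` is a Φ-function whose lower dilation index
`α_ψ = liminf_{t→0⁺} ψ(2t)/ψ(t)` is `> 1`, then for every `q > 0` one has
`∫_0^x ψ(t)^q / t dt ≤ C ψ(x)^q` for all `x ∈ (0,1]`. -/
theorem stmt_2 (ψ : ℝ → ℝ)
    (hcont : ContinuousOn ψ (Icc 0 1))
    (hconc : ConcaveOn ℝ (Icc 0 1) ψ)
    (hmono : MonotoneOn ψ (Icc 0 1))
    (h0 : ψ 0 = 0)
    (hpos : ∀ t ∈ Ioc (0 : ℝ) 1, 0 < ψ t)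
    (hα : 1 < liminf (fun t => ψ (2 * t) / ψ t) (nhdsWithin 0 (Ioi 0))) :
    ∀ q : ℝ, 0 < q → ∃ C : ℝ, 0 < C ∧ ∀ x ∈ Ioc (0 : ℝ) 1,
      ∫ t in Ioc (0 : ℝ) x, ψ t ^ q / t ≤ C * ψ x ^ q := by
  intro q hq
  have hψpos : ∀ t : ℝ, 0 < t → t ≤ 1 → 0 < ψ t := fun t h1 h2 => hpos t ⟨h1, h2⟩
  -- Step 1: extract a > 1 and δ with ψ(2t) ≥ aψ(t) on (0, δ]
  obtain ⟨a, ha1, haev⟩ : ∃ a : ℝ, 1 < a ∧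
      ∀ᶠ t in nhdsWithin 0 (Ioi 0), a < ψ (2 * t) / ψ t := by
    obtain ⟨a, ha1, ha2⟩ := exists_between hα
    refine ⟨a, ha1, eventually_lt_of_lt_liminf ha2 ?_⟩
    refine ⟨0, ?_⟩
    simp only [eventually_map]
    filter_upwards [Ioo_mem_nhdsGT_of_mem (by norm_num : (0:ℝ) ∈ Ico 0 (1/2))] with t ht
    exact div_nonneg (hψpos (2*t) (by linarith [ht.1]) (by linarith [ht.2])).le
      (hψpos t ht.1 (by linarith [ht.2])).le
  obtain ⟨δ', hδ'0, hδ'⟩ : ∃ δ' > (0:ℝ), Ioc 0 δ' ⊆ {t | a < ψ (2*t) / ψ t} := by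
    rw [eventually_iff, mem_nhdsGT_iff_exists_Ioc_subset] at haev
    obtain ⟨u, hu, hsub⟩ := haev
    exact ⟨u, hu, hsub⟩
  set δ : ℝ := min δ' (1/2) with hδdef
  have hδ0 : 0 < δ := lt_min hδ'0 (by norm_num)
  have hδhalf : δ ≤ 1/2 := min_le_right _ _
  have hstep : ∀ t : ℝ, 0 < t → t ≤ δ → a * ψ t ≤ ψ (2 * t) := by
    intro t ht0 htδ
    have h := hδ' ⟨ht0, htδ.trans (min_le_left _ _)⟩
    have hψt : 0 < ψ t := hψpos t ht0 (by linarith [hδhalf])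
    exact ((lt_div_iff₀ hψt).mp h).le
  set m : ℝ := 2 * δ with hmdef
  have hm0 : 0 < m := by positivity
  have hm1 : m ≤ 1 := by rw [hmdef]; linarith
  have ha0 : (0:ℝ) < a := lt_trans one_pos ha1
  set r : ℝ := a ^ (-q) with hrdef
  have hr0 : 0 < r := Real.rpow_pos_of_pos ha0 _
  have hr1 : r < 1 := Real.rpow_lt_one_of_one_lt_of_neg ha1 (by linarith)
  set B : ℝ := (1 - r)⁻¹ with hBdef
  have h1r : (1:ℝ) - r ≠ 0 := by linarith
  have hB0 : 0 < B := by rw [hBdef]; exact inv_pos.2 (by linarith)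
  have hBr : B * r + 1 = B := by
    rw [hBdef]; field_simp; ring
  -- halving inequality for ψ^q
  have hhalf : ∀ x : ℝ, 0 < x → x ≤ m → ψ (x/2) ^ q ≤ r * ψ x ^ q := by
    intro x hx0 hxm
    have hx2 : 0 < x / 2 := by positivity
    have hx2δ : x / 2 ≤ δ := by rw [hmdef] at hxm; linarith
    have hψx2 : 0 < ψ (x/2) := hψpos _ hx2 (by linarith [hδhalf])
    have h1 : a * ψ (x/2) ≤ ψ x := by
      have := hstep (x/2) hx2 hx2δ
      rwa [mul_div_cancel₀ x two_ne_zero] at this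
    have h2 : (a * ψ (x/2)) ^ q ≤ ψ x ^ q :=
      Real.rpow_le_rpow (by positivity) h1 hq.le
    rw [Real.mul_rpow ha0.le hψx2.le] at h2
    have haq : (0:ℝ) < a ^ q := Real.rpow_pos_of_pos ha0 _
    have hrinv : r = (a ^ q)⁻¹ := by rw [hrdef, Real.rpow_neg ha0.le]
    rw [hrinv, inv_mul_eq_div, le_div_iff₀ haq, mul_comm]
    exact h2
  -- generic piece bound
  have hpiece : ∀ y x : ℝ, 0 < y → y ≤ x → x ≤ 1 →
      ∫⁻ t in Ioc y x, ENNReal.ofReal (ψ t ^ q / t) ≤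
        ENNReal.ofReal (ψ x ^ q / y * (x - y)) := by
    intro y x hy0 hyx hx1
    have hx0 : 0 < x := hy0.trans_le hyx
    have hψxq : (0:ℝ) ≤ ψ x ^ q := (Real.rpow_pos_of_pos (hψpos x hx0 hx1) q).le
    calc ∫⁻ t in Ioc y x, ENNReal.ofReal (ψ t ^ q / t)
        ≤ ∫⁻ _ in Ioc y x, ENNReal.ofReal (ψ x ^ q / y) := by
          apply setLIntegral_mono' measurableSet_Ioc
          intro t ht
          apply ENNReal.ofReal_le_ofReal
          have ht0 : 0 < t := hy0.trans ht.1
          have hψt0 : 0 ≤ ψ t := (hψpos t ht0 (ht.2.trans hx1)).le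
          exact div_le_div₀ hψxq
            (Real.rpow_le_rpow hψt0
              (hmono ⟨ht0.le, ht.2.trans hx1⟩ ⟨hx0.le, hx1⟩ ht.2) hq.le)
            hy0 ht.1.le
      _ = ENNReal.ofReal (ψ x ^ q / y) * volume (Ioc y x) := setLIntegral_const _ _
      _ = ENNReal.ofReal (ψ x ^ q / y * (x - y)) := by
          rw [Real.volume_Ioc, ← ENNReal.ofReal_mul (by positivity)]
  -- the dyadic induction
  have hind : ∀ n : ℕ, ∀ x : ℝ, 0 < x → x ≤ m →
      ∫⁻ t in Ioc (x / 2 ^ n) x, ENNReal.ofReal (ψ t ^ q / t) ≤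
        ENNReal.ofReal (B * ψ x ^ q) := by
    intro n
    induction n with
    | zero =>
      intro x hx0 hxm
      simp only [pow_zero, div_one, Ioc_self, Measure.restrict_empty,
        lintegral_zero_measure]
      exact zero_le
    | succ n ih =>
      intro x hx0 hxm
      have hx1 : x ≤ 1 := hxm.trans hm1
      have hψxq : (0:ℝ) ≤ ψ x ^ q := (Real.rpow_pos_of_pos (hψpos x hx0 hx1) q).le
      have h2le : (2:ℝ) ≤ 2 ^ (n+1) := by
        calc (2:ℝ) = 2 ^ 1 := (pow_one 2).symm
        _ ≤ 2 ^ (n+1) := pow_le_pow_right₀ one_le_two (by omega)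
      have hsplit : Ioc (x / 2 ^ (n+1)) x = Ioc (x / 2 ^ (n+1)) (x/2) ∪ Ioc (x/2) x := by
        rw [Ioc_union_Ioc_eq_Ioc]
        · apply div_le_div_of_nonneg_left hx0.le (by norm_num) h2le
        · linarith
      have heq : x / 2 ^ (n+1) = (x/2) / 2 ^ n := by
        rw [pow_succ]; ring
      calc ∫⁻ t in Ioc (x / 2 ^ (n+1)) x, ENNReal.ofReal (ψ t ^ q / t)
          ≤ (∫⁻ t in Ioc ((x/2) / 2 ^ n) (x/2), ENNReal.ofReal (ψ t ^ q / t)) +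
            ∫⁻ t in Ioc (x/2) x, ENNReal.ofReal (ψ t ^ q / t) := by
            rw [hsplit, heq]
            exact lintegral_union_le _ _ _
        _ ≤ ENNReal.ofReal (B * ψ (x/2) ^ q) + ENNReal.ofReal (ψ x ^ q / (x/2) * (x - x/2)) :=
            add_le_add (ih (x/2) (by positivity) (by linarith))
              (hpiece (x/2) x (by positivity) (by linarith) hx1)
        _ ≤ ENNReal.ofReal (B * (r * ψ x ^ q)) + ENNReal.ofReal (ψ x ^ q) := by
            apply add_le_add
            · exact ENNReal.ofReal_le_ofReal
                (mul_le_mul_of_nonneg_left (hhalf x hx0 hxm) hB0.le)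
            · apply ENNReal.ofReal_le_ofReal
              have hx2 : x - x/2 = x/2 := by ring
              rw [hx2, div_mul_cancel₀]
              positivity
        _ = ENNReal.ofReal (B * (r * ψ x ^ q) + ψ x ^ q) :=
            (ENNReal.ofReal_add (by positivity) hψxq).symm
        _ = ENNReal.ofReal (B * ψ x ^ q) := by
            congr 1
            have h' : B * (r * ψ x ^ q) + ψ x ^ q = (B * r + 1) * ψ x ^ q := by ring
            rw [h', hBr]
  -- measurability
  have hψmIcc : AEMeasurable ψ (volume.restrict (Icc (0:ℝ) 1)) :=
    hcont.aemeasurable measurableSet_Icc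
  have hrpowm : Measurable fun y : ℝ => y ^ q :=
    (Real.continuous_rpow_const hq.le).measurable
  have hfm : ∀ s : Set ℝ, s ⊆ Icc (0:ℝ) 1 →
      AEMeasurable (fun t => ENNReal.ofReal (ψ t ^ q / t)) (volume.restrict s) := by
    intro s hs
    have hψs : AEMeasurable ψ (volume.restrict s) :=
      hψmIcc.mono_measure (Measure.restrict_mono hs le_rfl)
    exact ENNReal.measurable_ofReal.comp_aemeasurable
      ((hrpowm.comp_aemeasurable hψs).div aemeasurable_id)
  -- passing to the limit: bound on Ioc 0 x for x ≤ m
  have hlim : ∀ x : ℝ, 0 < x → x ≤ m →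
      ∫⁻ t in Ioc (0:ℝ) x, ENNReal.ofReal (ψ t ^ q / t) ≤
        ENNReal.ofReal (B * ψ x ^ q) := by
    intro x hx0 hxm
    set g : ℝ → ENNReal := fun t => ENNReal.ofReal (ψ t ^ q / t) with hg
    have hsub0 : ∀ n : ℕ, Ioc (x / 2 ^ n) x ⊆ Ioc (0:ℝ) x := by
      intro n
      exact Ioc_subset_Ioc_left (by positivity)
    have hmeasn : ∀ n : ℕ, AEMeasurable (fun t => (Ioc (x / 2 ^ n) x).indicator g t) volume := by
      intro n
      rw [aemeasurable_indicator_iff measurableSet_Ioc]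
      exact hfm _ (fun t ht => ⟨(by positivity : (0:ℝ) < x / 2 ^ n).le.trans ht.1.le,
        ht.2.trans (hxm.trans hm1)⟩)
    have hmonoind : ∀ t, Monotone fun n : ℕ => (Ioc (x / 2 ^ n) x).indicator g t := by
      intro t i j hij
      apply indicator_le_indicator_of_subset
      · apply Ioc_subset_Ioc_left
        apply div_le_div_of_nonneg_left hx0.le (by positivity)
        exact pow_le_pow_right₀ one_le_two hij
      · intro u; exact zero_le
    have hsup : ∀ t, (Ioc (0:ℝ) x).indicator g t
        = ⨆ n : ℕ, (Ioc (x / 2 ^ n) x).indicator g t := by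
      intro t
      by_cases ht : t ∈ Ioc (0:ℝ) x
      · rw [indicator_of_mem ht]
        apply le_antisymm
        · obtain ⟨n, hn⟩ := pow_unbounded_of_one_lt (x / t) (one_lt_two (α := ℝ))
          have htn : t ∈ Ioc (x / 2 ^ n) x := by
            constructor
            · rw [div_lt_iff₀ (by positivity)]
              rw [div_lt_iff₀ ht.1] at hn
              linarith [hn]
            · exact ht.2
          calc g t = (Ioc (x / 2 ^ n) x).indicator g t := (indicator_of_mem htn g).symm
            _ ≤ ⨆ n : ℕ, (Ioc (x / 2 ^ n) x).indicator g t :=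
                le_iSup (fun n : ℕ => (Ioc (x / 2 ^ n) x).indicator g t) n
        · exact iSup_le fun n => indicator_le_self _ _ t
      · rw [indicator_of_notMem ht]
        symm
        simp only [ENNReal.iSup_eq_zero]
        intro n
        rw [indicator_of_notMem (fun hc => ht (hsub0 n hc))]
    calc ∫⁻ t in Ioc (0:ℝ) x, g t
        = ∫⁻ t, (Ioc (0:ℝ) x).indicator g t := (lintegral_indicator measurableSet_Ioc g).symm
      _ = ∫⁻ t, ⨆ n : ℕ, (Ioc (x / 2 ^ n) x).indicator g t := by simp_rw [hsup]
      _ = ⨆ n : ℕ, ∫⁻ t, (Ioc (x / 2 ^ n) x).indicator g t :=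
          lintegral_iSup' hmeasn (ae_of_all _ hmonoind)
      _ = ⨆ n : ℕ, ∫⁻ t in Ioc (x / 2 ^ n) x, g t := by
          simp_rw [lintegral_indicator measurableSet_Ioc]
      _ ≤ ENNReal.ofReal (B * ψ x ^ q) := iSup_le fun n => hind n x hx0 hxm
  -- the constant
  have hψm0 : 0 < ψ m := hψpos m hm0 hm1
  have hψ10 : 0 < ψ 1 := hψpos 1 one_pos le_rfl
  have hψmq : 0 < ψ m ^ q := Real.rpow_pos_of_pos hψm0 q
  have hψ1q : 0 < ψ 1 ^ q := Real.rpow_pos_of_pos hψ10 q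
  set D : ℝ := ψ 1 ^ q / (m * ψ m ^ q) with hDdef
  have hD0 : 0 < D := by rw [hDdef]; positivity
  set C : ℝ := B + D with hCdef
  have hC0 : 0 < C := by positivity
  -- the full lintegral bound
  have hmain : ∀ x : ℝ, 0 < x → x ≤ 1 →
      ∫⁻ t in Ioc (0:ℝ) x, ENNReal.ofReal (ψ t ^ q / t) ≤
        ENNReal.ofReal (C * ψ x ^ q) := by
    intro x hx0 hx1
    have hψx : 0 < ψ x := hψpos x hx0 hx1
    have hψxq : 0 < ψ x ^ q := Real.rpow_pos_of_pos hψx q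
    rcases le_or_gt x m with hxm | hmx
    · refine (hlim x hx0 hxm).trans (ENNReal.ofReal_le_ofReal ?_)
      have : B * ψ x ^ q ≤ (B + D) * ψ x ^ q :=
        mul_le_mul_of_nonneg_right (by linarith) hψxq.le
      rw [hCdef]
      exact this
    · have hsplit : Ioc (0:ℝ) x = Ioc 0 m ∪ Ioc m x :=
        (Ioc_union_Ioc_eq_Ioc hm0.le hmx.le).symm
      have hψmx : ψ m ≤ ψ x := hmono ⟨hm0.le, hm1⟩ ⟨hx0.le, hx1⟩ hmx.le
      have h1q : ψ m ^ q ≤ ψ 1 ^ q :=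
        Real.rpow_le_rpow hψm0.le (hmono ⟨hm0.le, hm1⟩ ⟨zero_le_one, le_rfl⟩ hm1) hq.le
      have key : ψ x ^ q / m * (x - m) ≤ D * ψ x ^ q := by
        have hxm1 : x - m ≤ 1 := by linarith
        have e1 : ψ x ^ q / m * (x - m) ≤ ψ x ^ q / m := by
          calc ψ x ^ q / m * (x - m) ≤ ψ x ^ q / m * 1 :=
                mul_le_mul_of_nonneg_left hxm1 (div_pos hψxq hm0).le
            _ = ψ x ^ q / m := mul_one _
        have e2 : ψ x ^ q / m ≤ D * ψ x ^ q := by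
          rw [hDdef, div_mul_eq_mul_div, div_le_div_iff₀ hm0 (by positivity)]
          have h3 : ψ x ^ q * ψ m ^ q ≤ ψ x ^ q * ψ 1 ^ q :=
            mul_le_mul_of_nonneg_left h1q hψxq.le
          calc ψ x ^ q * (m * ψ m ^ q) = ψ x ^ q * ψ m ^ q * m := by ring
            _ ≤ ψ x ^ q * ψ 1 ^ q * m := mul_le_mul_of_nonneg_right h3 hm0.le
            _ = ψ 1 ^ q * ψ x ^ q * m := by ring
        linarith
      have hBx : B * ψ m ^ q ≤ B * ψ x ^ q := by
        apply mul_le_mul_of_nonneg_left _ hB0.le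
        exact Real.rpow_le_rpow hψm0.le hψmx hq.le
      calc ∫⁻ t in Ioc (0:ℝ) x, ENNReal.ofReal (ψ t ^ q / t)
          ≤ (∫⁻ t in Ioc (0:ℝ) m, ENNReal.ofReal (ψ t ^ q / t)) +
            ∫⁻ t in Ioc m x, ENNReal.ofReal (ψ t ^ q / t) := by
            rw [hsplit]; exact lintegral_union_le _ _ _
        _ ≤ ENNReal.ofReal (B * ψ m ^ q) + ENNReal.ofReal (ψ x ^ q / m * (x - m)) :=
            add_le_add (hlim m hm0 le_rfl) (hpiece m x hm0 hmx.le hx1)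
        _ ≤ ENNReal.ofReal (B * ψ x ^ q) + ENNReal.ofReal (D * ψ x ^ q) :=
            add_le_add (ENNReal.ofReal_le_ofReal hBx) (ENNReal.ofReal_le_ofReal key)
        _ = ENNReal.ofReal (C * ψ x ^ q) := by
            rw [← ENNReal.ofReal_add (by positivity) (by positivity)]
            congr 1
            rw [hCdef]; ring
  -- conversion to the Bochner integral
  refine ⟨C, hC0, ?_⟩
  rintro x ⟨hx0, hx1⟩
  have hψx : 0 < ψ x := hψpos x hx0 hx1
  have hnn : 0 ≤ᵐ[volume.restrict (Ioc (0:ℝ) x)] fun t => ψ t ^ q / t := by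
    rw [EventuallyLE, ae_restrict_iff' measurableSet_Ioc]
    apply ae_of_all
    intro t ht
    have hψt : 0 < ψ t := hψpos t ht.1 (ht.2.trans hx1)
    have h' : 0 < ψ t ^ q := Real.rpow_pos_of_pos hψt q
    simp only [Pi.zero_apply]
    exact (div_pos h' ht.1).le
  have hfm' : AEMeasurable (fun t => ψ t ^ q / t) (volume.restrict (Ioc (0:ℝ) x)) := by
    have hss : Ioc (0:ℝ) x ⊆ Icc (0:ℝ) 1 := fun t ht => ⟨ht.1.le, ht.2.trans hx1⟩
    have hψs : AEMeasurable ψ (volume.restrict (Ioc (0:ℝ) x)) :=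
      hψmIcc.mono_measure (Measure.restrict_mono hss le_rfl)
    exact (hrpowm.comp_aemeasurable hψs).div aemeasurable_id
  rw [integral_eq_lintegral_of_nonneg_ae hnn hfm'.aestronglyMeasurable]
  apply ENNReal.toReal_le_of_le_ofReal
    (mul_nonneg hC0.le (Real.rpow_pos_of_pos hψx q).le)
  exact hmain x hx0 hx1
end

section
/- Let φ, ψ : [0,1] → ℝ be Φ-functions (continuous, concave, nondecreasing, vanishing at 0, positive on (0,1]) with dilation indices satisfying 1 < α_ψ ≤ β_ψ < α_φ ≤ β_φ < 2, and let 0 < θ < ∞. Then there exists a constant C (independent of n) such that for all n ∈ ℕ, ∑_{s=0}^{n} (ψ(2^{-s})/φ(2^{-s}))^θ ≤ C · (ψ(2^{-n})/φ(2^{-n}))^θ. -/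
open Filter MeasureTheory Set Topology

private lemma aux_sum_geo (a : ℕ → ℝ) (ha : ∀ s, 0 < a s) (q : ℝ) (hq0 : 0 ≤ q) (hq1 : q < 1)
    (N : ℕ) (hrec : ∀ s, N ≤ s → a s ≤ q * a (s + 1)) :
    ∃ C : ℝ, 0 < C ∧ ∀ n, ∑ s ∈ Finset.range (n + 1), a s ≤ C * a n := by
  set S : ℕ → ℝ := fun n => ∑ s ∈ Finset.range (n + 1), a s with hS
  have hSpos : ∀ n, 0 < S n := fun n => Finset.sum_pos (fun s _ => ha s) (by simp)
  set C₀ : ℝ := ∑ k ∈ Finset.range (N + 1), S k / a k with hC₀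
  have hC₀nonneg : 0 ≤ C₀ :=
    Finset.sum_nonneg fun k _ => le_of_lt (div_pos (hSpos k) (ha k))
  have h1q : 0 < 1 - q := by linarith
  have hinvpos : 0 < 1 / (1 - q) := by positivity
  refine ⟨C₀ + 1 / (1 - q), by linarith, ?_⟩
  set C := C₀ + 1 / (1 - q) with hCdef
  have hCpos : 0 < C := by simp only [hCdef]; linarith
  have hCq : C * q + 1 ≤ C := by
    have h2 : 1 / (1 - q) ≤ C := by simp only [hCdef]; linarith
    have h3 : (1 / (1 - q)) * (1 - q) = 1 := by field_simp
    have h4 : 1 ≤ C * (1 - q) := by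
      calc (1:ℝ) = (1 / (1 - q)) * (1 - q) := h3.symm
        _ ≤ C * (1 - q) := mul_le_mul_of_nonneg_right h2 (le_of_lt h1q)
    nlinarith
  have hsmall : ∀ n, n ≤ N → S n ≤ C * a n := by
    intro n hn
    have h1 : S n / a n ≤ C₀ :=
      Finset.single_le_sum (f := fun k => S k / a k)
        (fun k _ => le_of_lt (div_pos (hSpos k) (ha k)))
        (Finset.mem_range.mpr (Nat.lt_succ_of_le hn))
    have h2 : S n ≤ C₀ * a n := by
      rw [div_le_iff₀ (ha n)] at h1; linarith
    have h3 : C₀ * a n ≤ C * a n := by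
      apply mul_le_mul_of_nonneg_right _ (le_of_lt (ha n))
      simp only [hCdef]; linarith
    linarith
  have hbig : ∀ n, N ≤ n → S n ≤ C * a n := by
    intro n hn
    induction n, hn using Nat.le_induction with
    | base => exact hsmall N le_rfl
    | succ n hn ih =>
      have hSn1 : S (n + 1) = S n + a (n + 1) := Finset.sum_range_succ a (n + 1)
      have h1 : a n ≤ q * a (n + 1) := hrec n hn
      have h4 := mul_le_mul_of_nonneg_left h1 (le_of_lt hCpos)
      have h5 : (C * q + 1) * a (n + 1) ≤ C * a (n + 1) :=
        mul_le_mul_of_nonneg_right hCq (le_of_lt (ha (n + 1)))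
      calc S (n + 1) = S n + a (n + 1) := hSn1
        _ ≤ C * a n + a (n + 1) := by linarith
        _ ≤ C * (q * a (n + 1)) + a (n + 1) := by linarith
        _ = (C * q + 1) * a (n + 1) := by ring
        _ ≤ C * a (n + 1) := h5
  intro n
  rcases le_or_gt n N with h | h
  · exact hsmall n h
  · exact hbig n (le_of_lt h)

private lemma aux_double_le {f : ℝ → ℝ} (hconc : ConcaveOn ℝ (Icc 0 1) f) (hf0 : f 0 = 0)
    {t : ℝ} (ht : t ∈ Ioc (0 : ℝ) (1 / 2)) : f (2 * t) ≤ 2 * f t := by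
  have h0 : (0 : ℝ) ∈ Icc (0 : ℝ) 1 := by norm_num
  have h2t : 2 * t ∈ Icc (0 : ℝ) 1 := ⟨by linarith [ht.1], by linarith [ht.2]⟩
  have h := hconc.2 h0 h2t (show (0:ℝ) ≤ 1/2 by norm_num) (show (0:ℝ) ≤ 1/2 by norm_num)
    (by norm_num)
  simp only [smul_eq_mul, mul_zero, hf0, zero_add] at h
  have : (1 / 2 : ℝ) * (2 * t) = t := by ring
  rw [this] at h
  linarith

/-- Lemma 4: for Φ-functions `φ, ψ` with `1 < α_ψ ≤ β_ψ < α_φ ≤ β_φ < 2` and `0 < θ < ∞`,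
`∑_{s=0}^n (ψ(2^{-s})/φ(2^{-s}))^θ ≤ C (ψ(2^{-n})/φ(2^{-n}))^θ` uniformly in `n`. -/
theorem stmt_4 (φ ψ : ℝ → ℝ)
    (hcontφ : ContinuousOn φ (Icc 0 1)) (hconcφ : ConcaveOn ℝ (Icc 0 1) φ)
    (hmonoφ : MonotoneOn φ (Icc 0 1)) (hφ0 : φ 0 = 0)
    (hφpos : ∀ t ∈ Ioc (0 : ℝ) 1, 0 < φ t)
    (hcontψ : ContinuousOn ψ (Icc 0 1)) (hconcψ : ConcaveOn ℝ (Icc 0 1) ψ)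
    (hmonoψ : MonotoneOn ψ (Icc 0 1)) (hψ0 : ψ 0 = 0)
    (hψpos : ∀ t ∈ Ioc (0 : ℝ) 1, 0 < ψ t)
    (hαψ : 1 < liminf (fun t => ψ (2 * t) / ψ t) (nhdsWithin 0 (Ioi 0)))
    (hβψαφ : limsup (fun t => ψ (2 * t) / ψ t) (nhdsWithin 0 (Ioi 0)) <
      liminf (fun t => φ (2 * t) / φ t) (nhdsWithin 0 (Ioi 0)))
    (hβφ : limsup (fun t => φ (2 * t) / φ t) (nhdsWithin 0 (Ioi 0)) < 2)
    (θ : ℝ) (hθ : 0 < θ) :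
    ∃ C : ℝ, 0 < C ∧ ∀ n : ℕ,
      ∑ s ∈ Finset.range (n + 1),
        (ψ ((2 : ℝ) ^ (-(s : ℝ))) / φ ((2 : ℝ) ^ (-(s : ℝ)))) ^ θ ≤
      C * (ψ ((2 : ℝ) ^ (-(n : ℝ))) / φ ((2 : ℝ) ^ (-(n : ℝ)))) ^ θ := by
  have hmem : ∀ᶠ t in 𝓝[>] (0 : ℝ), t ∈ Ioc (0 : ℝ) (1 / 2) := by
    have : Ioc (0 : ℝ) (1 / 2) ∈ 𝓝[>] (0 : ℝ) :=
      mem_nhdsGT_iff_exists_Ioc_subset.mpr ⟨1 / 2, by norm_num, subset_rfl⟩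
    exact this
  -- positivity facts
  have hposmem : ∀ t ∈ Ioc (0 : ℝ) (1 / 2), 0 < ψ t ∧ 0 < φ t ∧ 0 < ψ (2 * t) ∧ 0 < φ (2 * t) := by
    intro t ht
    have ht1 : t ∈ Ioc (0 : ℝ) 1 := ⟨ht.1, by linarith [ht.2]⟩
    have h2t : 2 * t ∈ Ioc (0 : ℝ) 1 := ⟨by linarith [ht.1], by linarith [ht.2]⟩
    exact ⟨hψpos t ht1, hφpos t ht1, hψpos _ h2t, hφpos _ h2t⟩
  have hψub : ∀ᶠ t in 𝓝[>] (0 : ℝ), ψ (2 * t) / ψ t ≤ 2 := by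
    filter_upwards [hmem] with t ht
    have h1 : 0 < ψ t := (hposmem t ht).1
    have h2 := aux_double_le hconcψ hψ0 ht
    rw [div_le_iff₀ h1]; linarith
  have hψlb : ∀ᶠ t in 𝓝[>] (0 : ℝ), (1 : ℝ) ≤ ψ (2 * t) / ψ t := by
    filter_upwards [hmem] with t ht
    have h1 : 0 < ψ t := (hposmem t ht).1
    have h2 : ψ t ≤ ψ (2 * t) := by
      apply hmonoψ ⟨le_of_lt ht.1, by linarith [ht.2]⟩
        ⟨by linarith [ht.1], by linarith [ht.2]⟩ (by linarith [ht.1])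
    rw [le_div_iff₀ h1]; linarith
  have hφlb : ∀ᶠ t in 𝓝[>] (0 : ℝ), (1 : ℝ) ≤ φ (2 * t) / φ t := by
    filter_upwards [hmem] with t ht
    have h1 : 0 < φ t := (hposmem t ht).2.1
    have h2 : φ t ≤ φ (2 * t) := by
      apply hmonoφ ⟨le_of_lt ht.1, by linarith [ht.2]⟩
        ⟨by linarith [ht.1], by linarith [ht.2]⟩ (by linarith [ht.1])
    rw [le_div_iff₀ h1]; linarith
  have hbψ : IsBoundedUnder (· ≤ ·) (𝓝[>] (0 : ℝ)) (fun t => ψ (2 * t) / ψ t) :=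
    ⟨2, eventually_map.mpr hψub⟩
  have hbψge : IsBoundedUnder (· ≥ ·) (𝓝[>] (0 : ℝ)) (fun t => ψ (2 * t) / ψ t) :=
    ⟨1, eventually_map.mpr hψlb⟩
  have hbφge : IsBoundedUnder (· ≥ ·) (𝓝[>] (0 : ℝ)) (fun t => φ (2 * t) / φ t) :=
    ⟨1, eventually_map.mpr hφlb⟩
  set L := limsup (fun t => ψ (2 * t) / ψ t) (𝓝[>] (0 : ℝ)) with hL
  set M := liminf (fun t => φ (2 * t) / φ t) (𝓝[>] (0 : ℝ)) with hM
  have hLM : L < M := hβψαφ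
  have hL1 : (1 : ℝ) ≤ L := le_limsup_of_frequently_le hψlb.frequently hbψ
  set c₁ : ℝ := L + (M - L) / 3 with hc₁
  set c₂ : ℝ := M - (M - L) / 3 with hc₂
  have hc₁pos : 0 < c₁ := by simp only [hc₁]; linarith
  have hc₁c₂ : c₁ < c₂ := by simp only [hc₁, hc₂]; linarith
  have hc₂pos : 0 < c₂ := lt_trans hc₁pos hc₁c₂
  have hψev : ∀ᶠ t in 𝓝[>] (0 : ℝ), ψ (2 * t) / ψ t < c₁ :=
    eventually_lt_of_limsup_lt (by simp only [hc₁]; linarith) hbψ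
  have hφev : ∀ᶠ t in 𝓝[>] (0 : ℝ), c₂ < φ (2 * t) / φ t :=
    eventually_lt_of_lt_liminf (by simp only [hc₂]; linarith) hbφge
  have hall : ∀ᶠ t in 𝓝[>] (0 : ℝ),
      ψ (2 * t) / ψ t < c₁ ∧ c₂ < φ (2 * t) / φ t ∧ t ∈ Ioc (0 : ℝ) (1 / 2) :=
    hψev.and (hφev.and hmem)
  obtain ⟨ε, hε, hsub⟩ := mem_nhdsGT_iff_exists_Ioc_subset.mp hall
  rw [mem_Ioi] at hε
  set q : ℝ := c₁ / c₂ with hq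
  have hq0 : 0 ≤ q := le_of_lt (div_pos hc₁pos hc₂pos)
  have hq1 : q < 1 := (div_lt_one hc₂pos).mpr hc₁c₂
  have key : ∀ t ∈ Ioc (0 : ℝ) ε, ψ (2 * t) / φ (2 * t) ≤ q * (ψ t / φ t) := by
    intro t ht
    obtain ⟨h1, h2, h3⟩ := hsub ht
    obtain ⟨hψt, hφt, hψ2t, hφ2t⟩ := hposmem t h3
    have h4 : ψ (2 * t) < c₁ * ψ t := by rw [div_lt_iff₀ hψt] at h1; linarith
    have h5 : c₂ * φ t < φ (2 * t) := by rw [lt_div_iff₀ hφt] at h2; linarith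
    have h6 : ψ (2 * t) / φ (2 * t) ≤ (c₁ * ψ t) / (c₂ * φ t) :=
      div_le_div₀ (by positivity) (le_of_lt h4) (by positivity) (le_of_lt h5)
    rw [mul_div_mul_comm] at h6
    exact h6
  set a : ℕ → ℝ := fun s => (ψ ((2 : ℝ) ^ (-(s : ℝ))) / φ ((2 : ℝ) ^ (-(s : ℝ)))) ^ θ with haf
  have hpw : ∀ k : ℕ, (2 : ℝ) ^ (-(k : ℝ)) = (1 / 2 : ℝ) ^ k := by
    intro k
    rw [Real.rpow_neg (by norm_num), Real.rpow_natCast, one_div, inv_pow]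
  have hmem2 : ∀ k : ℕ, (2 : ℝ) ^ (-(k : ℝ)) ∈ Ioc (0 : ℝ) 1 := by
    intro k
    constructor
    · exact Real.rpow_pos_of_pos (by norm_num) _
    · rw [hpw]; exact pow_le_one₀ (by norm_num) (by norm_num)
  have ha : ∀ s, 0 < a s := by
    intro s
    exact Real.rpow_pos_of_pos
      (div_pos (hψpos _ (hmem2 s)) (hφpos _ (hmem2 s))) θ
  obtain ⟨N, hN⟩ := exists_pow_lt_of_lt_one hε (show (1 / 2 : ℝ) < 1 by norm_num)
  have hrec : ∀ s, N ≤ s → a s ≤ q ^ θ * a (s + 1) := by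
    intro s hs
    set t : ℝ := (2 : ℝ) ^ (-((s + 1 : ℕ) : ℝ)) with htdef
    have htpos : 0 < t := Real.rpow_pos_of_pos (by norm_num) _
    have htε : t ≤ ε := by
      rw [htdef, hpw]
      calc (1 / 2 : ℝ) ^ (s + 1) ≤ (1 / 2 : ℝ) ^ N :=
            pow_le_pow_of_le_one (by norm_num) (by norm_num) (by omega)
        _ ≤ ε := le_of_lt hN
    have h2t : 2 * t = (2 : ℝ) ^ (-(s : ℝ)) := by
      rw [htdef, show (((s + 1 : ℕ) : ℝ)) = (s : ℝ) + 1 by push_cast; ring,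
        show -((s : ℝ) + 1) = -(s : ℝ) + (-1) by ring,
        Real.rpow_add (by norm_num : (0:ℝ) < 2), Real.rpow_neg_one]
      ring
    have hk := key t ⟨htpos, htε⟩
    rw [h2t] at hk
    have hnn : 0 ≤ ψ ((2 : ℝ) ^ (-(s : ℝ))) / φ ((2 : ℝ) ^ (-(s : ℝ))) :=
      le_of_lt (div_pos (hψpos _ (hmem2 s)) (hφpos _ (hmem2 s)))
    have hnn2 : 0 ≤ ψ t / φ t :=
      le_of_lt (div_pos (hψpos _ (hmem2 (s + 1))) (hφpos _ (hmem2 (s + 1))))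
    have h7 := Real.rpow_le_rpow hnn hk (le_of_lt hθ)
    rw [Real.mul_rpow hq0 hnn2] at h7
    exact h7
  have hqθ0 : 0 ≤ q ^ θ := le_of_lt (Real.rpow_pos_of_pos (div_pos hc₁pos hc₂pos) θ)
  have hqθ1 : q ^ θ < 1 := Real.rpow_lt_one hq0 hq1 hθ
  obtain ⟨C, hC, hCn⟩ := aux_sum_geo a ha (q ^ θ) hqθ0 hqθ1 N hrec
  exact ⟨C, hC, hCn⟩
end

section
/- Let ψ : [0,1] → ℝ be a Φ-function (continuous, concave, nondecreasing, ψ(0)=0, positive on (0,1]) with 1 < α_ψ ≤ β_ψ < 2, and let 0 < θ < ∞. Then there is a constant C (independent of n) such that for all n ∈ ℕ, ∑_{s=n}^{∞} ψ(2^{-s})^θ ≤ C · ψ(2^{-n})^θ. -/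
open Filter MeasureTheory Set
open scoped ENNReal

/-- Lemma 5: for a Φ-function `ψ` with `1 < α_ψ ≤ β_ψ < 2` and `0 < θ < ∞`,
`∑_{s=n}^∞ ψ(2^{-s})^θ ≤ C ψ(2^{-n})^θ` uniformly in `n` (the tail sum in `[0,∞]`). -/
theorem stmt_5 (ψ : ℝ → ℝ)
    (hcont : ContinuousOn ψ (Icc 0 1)) (hconc : ConcaveOn ℝ (Icc 0 1) ψ)
    (hmono : MonotoneOn ψ (Icc 0 1)) (h0 : ψ 0 = 0)
    (hpos : ∀ t ∈ Ioc (0 : ℝ) 1, 0 < ψ t)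
    (hα : 1 < liminf (fun t => ψ (2 * t) / ψ t) (nhdsWithin 0 (Ioi 0)))
    (hβ : limsup (fun t => ψ (2 * t) / ψ t) (nhdsWithin 0 (Ioi 0)) < 2)
    (θ : ℝ) (hθ : 0 < θ) :
    ∃ C : ℝ, 0 < C ∧ ∀ n : ℕ,
      ∑' k : ℕ, ENNReal.ofReal (ψ ((2 : ℝ) ^ (-((n + k : ℕ) : ℝ))) ^ θ) ≤
        ENNReal.ofReal (C * ψ ((2 : ℝ) ^ (-(n : ℝ))) ^ θ) := by
  set p : ℕ → ℝ := fun m => (2 : ℝ) ^ (-(m : ℝ)) with hpdef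
  have hp_pos : ∀ m, 0 < p m := fun m => Real.rpow_pos_of_pos two_pos _
  have hp_le_one : ∀ m, p m ≤ 1 := fun m =>
    Real.rpow_le_one_of_one_le_of_nonpos one_le_two (by simp)
  have hp_mem : ∀ m, p m ∈ Icc (0 : ℝ) 1 := fun m => ⟨(hp_pos m).le, hp_le_one m⟩
  have hψpos : ∀ m, 0 < ψ (p m) := fun m => hpos _ ⟨hp_pos m, hp_le_one m⟩
  have hψθpos : ∀ m, 0 < ψ (p m) ^ θ := fun m => Real.rpow_pos_of_pos (hψpos m) θ
  have hp_anti : ∀ {m m' : ℕ}, m ≤ m' → p m' ≤ p m := by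
    intro m m' h
    exact Real.rpow_le_rpow_of_exponent_le one_le_two (by exact_mod_cast neg_le_neg (by exact_mod_cast h))
  have hdouble : ∀ m : ℕ, 2 * p (m + 1) = p m := by
    intro m
    simp only [hpdef]
    push_cast
    rw [neg_add, Real.rpow_add (by norm_num : (0:ℝ) < 2), Real.rpow_neg_one]
    ring
  -- the ratio function is eventually bounded below, hence cobounded
  have hbd : Filter.IsBoundedUnder (· ≥ ·) (nhdsWithin (0:ℝ) (Ioi 0))
      (fun t => ψ (2 * t) / ψ t) := by
    refine ⟨0, ?_⟩
    rw [Filter.eventually_map]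
    filter_upwards [Ioo_mem_nhdsGT_of_mem (by norm_num : (0:ℝ) ∈ Ico (0:ℝ) (1/2))] with t ht
    have ht0 : 0 < t := ht.1
    have ht2 : 2 * t ≤ 1 := by linarith [ht.2]
    have h1 : 0 < ψ t := hpos t ⟨ht0, by linarith [ht.2]⟩
    have h2 : 0 ≤ ψ (2 * t) := (hpos (2 * t) ⟨by linarith, ht2⟩).le
    positivity
  obtain ⟨a, ha1, haL⟩ := exists_between hα
  have hev : ∀ᶠ t in nhdsWithin (0:ℝ) (Ioi 0), a < ψ (2 * t) / ψ t :=
    Filter.eventually_lt_of_lt_liminf haL hbd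
  obtain ⟨ε, hε0, hεsub⟩ := mem_nhdsGT_iff_exists_Ioo_subset.mp hev
  -- pick N with p N < ε
  obtain ⟨N, hN⟩ : ∃ N : ℕ, p N < ε := by
    obtain ⟨N, hN⟩ := exists_pow_lt_of_lt_one hε0 (by norm_num : (1:ℝ)/2 < 1)
    refine ⟨N, ?_⟩
    have hpN : p N = (1/2 : ℝ) ^ N := by
      simp only [hpdef]
      rw [Real.rpow_neg (by norm_num), Real.rpow_natCast, ← inv_pow]
      norm_num
    rw [hpN]; exact hN
  -- decay: for m ≥ N, ψ (p (m+1)) * a ≤ ψ (p m)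
  have hdec : ∀ m : ℕ, N ≤ m → ψ (p (m + 1)) * a ≤ ψ (p m) := by
    intro m hm
    have hmem : p (m + 1) ∈ Ioo (0:ℝ) ε :=
      ⟨hp_pos _, lt_of_le_of_lt (hp_anti (Nat.le_succ_of_le hm)) hN⟩
    have := hεsub hmem
    simp only [mem_setOf_eq] at this
    have hψt : 0 < ψ (p (m + 1)) := hψpos _
    have : a * ψ (p (m + 1)) < ψ (2 * p (m + 1)) := by
      rw [← lt_div_iff₀ hψt]; exact this
    rw [hdouble m] at this
    linarith [this]
  have ha0 : 0 < a := by linarith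
  -- iterated decay
  have hiter : ∀ n : ℕ, N ≤ n → ∀ k : ℕ, ψ (p (n + k)) * a ^ k ≤ ψ (p n) := by
    intro n hn k
    induction k with
    | zero => simp
    | succ k ih =>
      have h1 : ψ (p (n + k + 1)) * a ≤ ψ (p (n + k)) := hdec (n + k) (le_trans hn (Nat.le_add_right n k))
      calc ψ (p (n + (k+1))) * a ^ (k+1)
          = (ψ (p (n + k + 1)) * a) * a ^ k := by
            rw [show n + (k+1) = n + k + 1 from rfl]; ring
        _ ≤ ψ (p (n + k)) * a ^ k := by
            apply mul_le_mul_of_nonneg_right h1 (pow_nonneg ha0.le k)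
        _ ≤ ψ (p n) := ih
  -- geometric ratio
  set r : ℝ := (a ^ θ)⁻¹ with hrdef
  have haθ : 1 < a ^ θ := Real.one_lt_rpow_iff_of_pos ha0 |>.mpr (Or.inl ⟨ha1, hθ⟩)
  have hr0 : 0 < r := by positivity
  have hr1 : r < 1 := by
    rw [hrdef, inv_lt_one_iff₀]; right; exact haθ
  have h1r : 0 < 1 - r := by linarith
  -- rpow of the iterated decay
  have hkey : ∀ n : ℕ, N ≤ n → ∀ k : ℕ, ψ (p (n + k)) ^ θ ≤ ψ (p n) ^ θ * r ^ k := by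
    intro n hn k
    have h1 : ψ (p (n + k)) ≤ ψ (p n) * (a ^ k)⁻¹ := by
      have h := hiter n hn k
      rw [← le_div_iff₀ (by positivity : (0:ℝ) < a ^ k)] at h
      rwa [div_eq_mul_inv] at h
    have h2 : ψ (p (n + k)) ^ θ ≤ (ψ (p n) * (a ^ k)⁻¹) ^ θ :=
      Real.rpow_le_rpow (hψpos _).le h1 hθ.le
    refine h2.trans_eq ?_
    rw [Real.mul_rpow (hψpos n).le (by positivity)]
    congr 1
    rw [Real.inv_rpow (by positivity), ← Real.rpow_natCast a k,
      ← Real.rpow_mul ha0.le, mul_comm ((k : ℕ) : ℝ) θ, Real.rpow_mul ha0.le,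
      Real.rpow_natCast, ← inv_pow]
  -- tail bound for n ≥ N
  set C₀ : ℝ := (1 - r)⁻¹ with hC₀def
  have hC₀pos : 0 < C₀ := by rw [hC₀def]; exact inv_pos.mpr h1r
  have htail : ∀ n : ℕ, N ≤ n →
      ∑' k : ℕ, ENNReal.ofReal (ψ (p (n + k)) ^ θ) ≤ ENNReal.ofReal (C₀ * ψ (p n) ^ θ) := by
    intro n hn
    have hsum : Summable (fun k : ℕ => ψ (p n) ^ θ * r ^ k) :=
      (summable_geometric_of_lt_one hr0.le hr1).mul_left _
    calc ∑' k : ℕ, ENNReal.ofReal (ψ (p (n + k)) ^ θ)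
        ≤ ∑' k : ℕ, ENNReal.ofReal (ψ (p n) ^ θ * r ^ k) := by
          exact ENNReal.tsum_le_tsum (fun k => ENNReal.ofReal_le_ofReal (hkey n hn k))
      _ = ENNReal.ofReal (∑' k : ℕ, ψ (p n) ^ θ * r ^ k) :=
          (ENNReal.ofReal_tsum_of_nonneg
            (fun k => mul_nonneg (hψθpos n).le (pow_nonneg hr0.le k)) hsum).symm
      _ = ENNReal.ofReal (C₀ * ψ (p n) ^ θ) := by
          rw [tsum_mul_left, tsum_geometric_of_lt_one hr0.le hr1, hC₀def, mul_comm]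
  -- a bound for the full series
  set P : ℝ := (∑ s ∈ Finset.range N, ψ (p s) ^ θ) + C₀ * ψ (p N) ^ θ with hPdef
  have hPpos : 0 < P := by
    rw [hPdef]
    have h1 : 0 ≤ ∑ s ∈ Finset.range N, ψ (p s) ^ θ :=
      Finset.sum_nonneg (fun s _ => (hψθpos s).le)
    have h2 : 0 < C₀ * ψ (p N) ^ θ := mul_pos hC₀pos (hψθpos N)
    linarith
  have hfull : ∑' s : ℕ, ENNReal.ofReal (ψ (p s) ^ θ) ≤ ENNReal.ofReal P := by
    have hsplit := Summable.sum_add_tsum_nat_add' (f := fun s : ℕ => ENNReal.ofReal (ψ (p s) ^ θ))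
      (k := N) ENNReal.summable
    rw [← hsplit]
    have h1 : ∑ i ∈ Finset.range N, ENNReal.ofReal (ψ (p i) ^ θ)
        = ENNReal.ofReal (∑ s ∈ Finset.range N, ψ (p s) ^ θ) :=
      (ENNReal.ofReal_sum_of_nonneg (fun i _ => (hψθpos i).le)).symm
    have h2 : ∑' i : ℕ, ENNReal.ofReal (ψ (p (i + N)) ^ θ) ≤ ENNReal.ofReal (C₀ * ψ (p N) ^ θ) := by
      calc ∑' i : ℕ, ENNReal.ofReal (ψ (p (i + N)) ^ θ)
          = ∑' i : ℕ, ENNReal.ofReal (ψ (p (N + i)) ^ θ) :=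
            tsum_congr (fun i => by rw [add_comm])
        _ ≤ _ := htail N le_rfl
    calc (∑ i ∈ Finset.range N, ENNReal.ofReal (ψ (p i) ^ θ))
          + ∑' i : ℕ, ENNReal.ofReal (ψ (p (i + N)) ^ θ)
        ≤ ENNReal.ofReal (∑ s ∈ Finset.range N, ψ (p s) ^ θ) + ENNReal.ofReal (C₀ * ψ (p N) ^ θ) := by
          rw [h1]; exact add_le_add_right h2 _
      _ = ENNReal.ofReal P := by
          rw [← ENNReal.ofReal_add (Finset.sum_nonneg (fun s _ => (hψθpos s).le))
            (mul_pos hC₀pos (hψθpos N)).le, hPdef]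
  -- final constant
  refine ⟨max C₀ (P / ψ (p N) ^ θ), lt_of_lt_of_le hC₀pos (le_max_left _ _), ?_⟩
  intro n
  set C : ℝ := max C₀ (P / ψ (p N) ^ θ)
  by_cases hn : N ≤ n
  · refine (htail n hn).trans (ENNReal.ofReal_le_ofReal ?_)
    exact mul_le_mul_of_nonneg_right (le_max_left _ _) (hψθpos n).le
  · push_neg at hn
    have h1 : ∑' k : ℕ, ENNReal.ofReal (ψ (p (n + k)) ^ θ)
        ≤ ∑' s : ℕ, ENNReal.ofReal (ψ (p s) ^ θ) :=
      ENNReal.tsum_comp_le_tsum_of_injective (add_right_injective n) _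
    refine (h1.trans hfull).trans (ENNReal.ofReal_le_ofReal ?_)
    have hψle : ψ (p N) ^ θ ≤ ψ (p n) ^ θ :=
      Real.rpow_le_rpow (hψpos N).le
        (hmono (hp_mem N) (hp_mem n) (hp_anti hn.le)) hθ.le
    have hC2 : P / ψ (p N) ^ θ ≤ C := le_max_right _ _
    have hPeq : P = (P / ψ (p N) ^ θ) * ψ (p N) ^ θ :=
      (div_mul_cancel₀ P (hψθpos N).ne').symm
    rw [hPeq]
    have hratio_nonneg : 0 ≤ P / ψ (p N) ^ θ := div_nonneg hPpos.le (hψθpos N).le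
    calc (P / ψ (p N) ^ θ) * ψ (p N) ^ θ ≤ C * ψ (p N) ^ θ :=
          mul_le_mul_of_nonneg_right hC2 (hψθpos N).le
      _ ≤ C * ψ (p n) ^ θ :=
          mul_le_mul_of_nonneg_left hψle (le_trans hC₀pos.le (le_max_left _ _))
end

section
/- Let φ, ψ : [0,1] → ℝ be Φ-functions with α_φ > β_ψ > 1 (dilation indices at 0). Then there exists a Φ-function g₁ : [0,1] → ℝ and constants C₁, C₂ > 0 such that C₁ g₁(x) ≤ φ(x)/ψ(x) ≤ C₂ g₁(x) for all x ∈ (0,1], g₁(0)=0, and α_{g₁} > 1. -/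
open Filter MeasureTheory Set

/-- Sublinearity of a concave function vanishing at `0`:
for `0 < s ≤ x ≤ 1` we have `s * f x ≤ x * f s`. -/
lemma stmt8_sublin (f : ℝ → ℝ) (hconc : ConcaveOn ℝ (Icc 0 1) f) (hf0 : f 0 = 0)
    {s x : ℝ} (hs : 0 < s) (hsx : s ≤ x) (hx1 : x ≤ 1) : s * f x ≤ x * f s := by
  have hx : 0 < x := lt_of_lt_of_le hs hsx
  have hmem : x ∈ Icc (0:ℝ) 1 := ⟨hx.le, hx1⟩
  have hmem0 : (0:ℝ) ∈ Icc (0:ℝ) 1 := ⟨le_refl _, zero_le_one⟩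
  have ha : (0:ℝ) ≤ s / x := by positivity
  have hb : (0:ℝ) ≤ 1 - s / x := by
    have : s / x ≤ 1 := by rw [div_le_one hx]; exact hsx
    linarith
  have hab : s / x + (1 - s / x) = 1 := by ring
  have h := hconc.2 hmem hmem0 ha hb hab
  have hpt : (s / x) • x + (1 - s / x) • (0:ℝ) = s := by
    simp only [smul_eq_mul, mul_zero, add_zero]; exact div_mul_cancel₀ s hx.ne'
  rw [hpt] at h
  have h' : (s / x) * f x ≤ f s := by
    simpa [hf0, smul_eq_mul] using h
  have := mul_le_mul_of_nonneg_left h' hx.le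
  calc s * f x = x * ((s / x) * f x) := by field_simp
    _ ≤ x * f s := this

/-- The set of (slope, intercept) pairs of nonnegative nondecreasing affine
majorants of `g` on `(0,1]`. -/
def stmt8Aff (g : ℝ → ℝ) : Set (ℝ × ℝ) :=
  {pq | 0 ≤ pq.1 ∧ 0 ≤ pq.2 ∧ ∀ t, 0 < t → t ≤ 1 → g t ≤ pq.1 * t + pq.2}

/-- The concave envelope used in the proof: infimum of nonnegative nondecreasing
affine majorants of `g`. -/
noncomputable def stmt8g₁ (g : ℝ → ℝ) (x : ℝ) : ℝ :=
  sInf ((fun pq : ℝ × ℝ => pq.1 * x + pq.2) '' stmt8Aff g)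

lemma stmt8g₁_le (g : ℝ → ℝ) {x : ℝ} (hx : 0 ≤ x) {p q : ℝ} (h : (p, q) ∈ stmt8Aff g) :
    stmt8g₁ g x ≤ p * x + q := by
  apply csInf_le
  · refine ⟨0, ?_⟩
    rintro y ⟨⟨p', q'⟩, ⟨hp', hq', -⟩, rfl⟩
    dsimp only at *
    nlinarith
  · exact ⟨(p, q), h, rfl⟩

lemma stmt8g₁_ge (g : ℝ → ℝ) {x c : ℝ} (hne : (stmt8Aff g).Nonempty)
    (h : ∀ p q, (p, q) ∈ stmt8Aff g → c ≤ p * x + q) : c ≤ stmt8g₁ g x := by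
  apply le_csInf (hne.image _)
  rintro y ⟨⟨p, q⟩, hpq, rfl⟩
  exact h p q hpq

set_option maxHeartbeats 4000000 in
/-- Lemma 3: if `φ, ψ` are Φ-functions with `α_φ > β_ψ > 1`, then there is a
Φ-function `g₁` equivalent to `x ↦ φ(x)/ψ(x)` on `(0,1]` with `α_{g₁} > 1`. -/
theorem stmt_8 (φ ψ : ℝ → ℝ)
    (hcontφ : ContinuousOn φ (Icc 0 1)) (hconcφ : ConcaveOn ℝ (Icc 0 1) φ)
    (hmonoφ : MonotoneOn φ (Icc 0 1)) (hφ0 : φ 0 = 0)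
    (hφpos : ∀ t ∈ Ioc (0 : ℝ) 1, 0 < φ t)
    (hcontψ : ContinuousOn ψ (Icc 0 1)) (hconcψ : ConcaveOn ℝ (Icc 0 1) ψ)
    (hmonoψ : MonotoneOn ψ (Icc 0 1)) (hψ0 : ψ 0 = 0)
    (hψpos : ∀ t ∈ Ioc (0 : ℝ) 1, 0 < ψ t)
    (hβψ : 1 < limsup (fun t => ψ (2 * t) / ψ t) (nhdsWithin 0 (Ioi 0)))
    (hαφ : limsup (fun t => ψ (2 * t) / ψ t) (nhdsWithin 0 (Ioi 0)) <
      liminf (fun t => φ (2 * t) / φ t) (nhdsWithin 0 (Ioi 0))) :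
    ∃ g₁ : ℝ → ℝ,
      ContinuousOn g₁ (Icc 0 1) ∧ ConcaveOn ℝ (Icc 0 1) g₁ ∧
      MonotoneOn g₁ (Icc 0 1) ∧ g₁ 0 = 0 ∧
      (∀ x ∈ Ioc (0 : ℝ) 1, 0 < g₁ x) ∧
      1 < liminf (fun t => g₁ (2 * t) / g₁ t) (nhdsWithin 0 (Ioi 0)) ∧
      ∃ C₁ C₂ : ℝ, 0 < C₁ ∧ 0 < C₂ ∧
        ∀ x ∈ Ioc (0 : ℝ) 1, C₁ * g₁ x ≤ φ x / ψ x ∧ φ x / ψ x ≤ C₂ * g₁ x := by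
  classical
  set g : ℝ → ℝ := fun x => φ x / ψ x with hgdef
  have hgx : ∀ x, g x = φ x / ψ x := fun _ => rfl
  have hφpos' : ∀ x, 0 < x → x ≤ 1 → 0 < φ x := fun x h1 h2 => hφpos x ⟨h1, h2⟩
  have hψpos' : ∀ x, 0 < x → x ≤ 1 → 0 < ψ x := fun x h1 h2 => hψpos x ⟨h1, h2⟩
  have hgpos : ∀ x, 0 < x → x ≤ 1 → 0 < g x := fun x h1 h2 =>
    div_pos (hφpos' x h1 h2) (hψpos' x h1 h2)
  have hmemI : ∀ x : ℝ, 0 ≤ x → x ≤ 1 → x ∈ Icc (0:ℝ) 1 := fun x h1 h2 => ⟨h1, h2⟩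
  -- P1 : s * g x ≤ x * g s for 0 < s ≤ x ≤ 1
  have hP1 : ∀ s x, 0 < s → s ≤ x → x ≤ 1 → s * g x ≤ x * g s := by
    intro s x hs hsx hx1
    have hx : 0 < x := lt_of_lt_of_le hs hsx
    have hψs := hψpos' s hs (le_trans hsx hx1)
    have hψx := hψpos' x hx hx1
    rw [hgx, hgx, mul_div_assoc', mul_div_assoc', div_le_div_iff₀ hψx hψs]
    have h1 : s * φ x ≤ x * φ s := stmt8_sublin φ hconcφ hφ0 hs hsx hx1
    have h2 : ψ s ≤ ψ x := hmonoψ (hmemI s hs.le (le_trans hsx hx1)) (hmemI x hx.le hx1) hsx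
    have hφs := hφpos' s hs (le_trans hsx hx1)
    exact mul_le_mul h1 h2 hψs.le (by positivity)
  -- adjacent comparison : g s ≤ 2 * g x for 0 < s ≤ x ≤ 1, x ≤ 2 s
  have hAdj : ∀ s x, 0 < s → s ≤ x → x ≤ 1 → x ≤ 2 * s → g s ≤ 2 * g x := by
    intro s x hs hsx hx1 hx2s
    have hx : 0 < x := lt_of_lt_of_le hs hsx
    have hψs := hψpos' s hs (le_trans hsx hx1)
    have hψx := hψpos' x hx hx1
    have hφs := hφpos' s hs (le_trans hsx hx1)
    have hφx := hφpos' x hx hx1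
    have hψub : ψ x ≤ 2 * ψ s := by
      have h1 : s * ψ x ≤ x * ψ s := stmt8_sublin ψ hconcψ hψ0 hs hsx hx1
      nlinarith
    have hφm : φ s ≤ φ x := hmonoφ (hmemI s hs.le (le_trans hsx hx1)) (hmemI x hx.le hx1) hsx
    rw [hgx, hgx, div_le_iff₀ hψs]
    rw [show (2:ℝ) * (φ x / ψ x) * ψ s = (2 * φ x * ψ s) / ψ x by ring]
    rw [le_div_iff₀ hψx]
    nlinarith
  -- extract the index information
  have hbddψ : ∀ᶠ t in nhdsWithin (0:ℝ) (Ioi 0), ψ (2 * t) / ψ t ≤ 2 := by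
    filter_upwards [Ioc_mem_nhdsGT (show (0:ℝ) < 1/2 by norm_num)] with t ht
    have ht0 : (0:ℝ) < t := ht.1
    have ht1 : t ≤ 1 := by linarith [ht.2]
    have hψt := hψpos' t ht0 ht1
    have h1 : t * ψ (2 * t) ≤ (2 * t) * ψ t :=
      stmt8_sublin ψ hconcψ hψ0 ht0 (by linarith) (by linarith [ht.2])
    rw [div_le_iff₀ hψt]; nlinarith
  have hbddφ : ∀ᶠ t in nhdsWithin (0:ℝ) (Ioi 0), (0:ℝ) ≤ φ (2 * t) / φ t := by
    filter_upwards [Ioc_mem_nhdsGT (show (0:ℝ) < 1/2 by norm_num)] with t ht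
    have h1 := hφpos' t ht.1 (by linarith [ht.2])
    have h2 := hφpos' (2 * t) (by linarith [ht.1]) (by linarith [ht.2])
    exact le_of_lt (div_pos h2 h1)
  have hBψ : IsBoundedUnder (· ≤ ·) (nhdsWithin (0:ℝ) (Ioi 0))
      (fun t => ψ (2 * t) / ψ t) := ⟨2, by simpa [eventually_map] using hbddψ⟩
  have hBφ : IsBoundedUnder (· ≥ ·) (nhdsWithin (0:ℝ) (Ioi 0))
      (fun t => φ (2 * t) / φ t) := ⟨0, by simpa [eventually_map] using hbddφ⟩
  set B := limsup (fun t => ψ (2 * t) / ψ t) (nhdsWithin (0:ℝ) (Ioi 0)) with hBdef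
  set A := liminf (fun t => φ (2 * t) / φ t) (nhdsWithin (0:ℝ) (Ioi 0)) with hAdef
  set b : ℝ := (2 * B + A) / 3 with hbdef
  set a : ℝ := (B + 2 * A) / 3 with hadef
  have hBb : B < b := by rw [hbdef]; linarith
  have haA : a < A := by rw [hadef]; linarith
  have hba : b < a := by rw [hadef, hbdef]; linarith
  have hb1 : 1 < b := by rw [hbdef]; linarith
  have hb0 : 0 < b := by linarith
  set c : ℝ := a / b with hcdef
  have hc1 : 1 < c := by rw [hcdef]; rw [lt_div_iff₀ hb0]; linarith
  have hc0 : 0 < c := by linarith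
  have hev1 : ∀ᶠ t in nhdsWithin (0:ℝ) (Ioi 0), ψ (2 * t) / ψ t < b :=
    eventually_lt_of_limsup_lt hBb hBψ
  have hev2 : ∀ᶠ t in nhdsWithin (0:ℝ) (Ioi 0), a < φ (2 * t) / φ t :=
    eventually_lt_of_lt_liminf haA hBφ
  -- get a δ
  obtain ⟨u, hu, husub⟩ := mem_nhdsGT_iff_exists_Ioc_subset.1 (hev1.and hev2)
  have hu0 : (0:ℝ) < u := hu
  set δ : ℝ := min (u / 2) (1 / 2) with hδdef
  have hδ0 : 0 < δ := by positivity
  have hδhalf : δ ≤ 1 / 2 := min_le_right _ _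
  have hδu : δ < u := lt_of_le_of_lt (min_le_left _ _) (by linarith)
  have hIdx : ∀ t, 0 < t → t ≤ δ → c * g t ≤ g (2 * t) := by
    intro t ht htδ
    have htu : t ∈ Ioc (0:ℝ) u := ⟨ht, by linarith⟩
    obtain ⟨h1, h2⟩ := husub htu
    have ht1 : t ≤ 1 := by linarith [hδhalf]
    have h2t1 : 2 * t ≤ 1 := by linarith [hδhalf]
    have hφt := hφpos' t ht ht1
    have hψt := hψpos' t ht ht1
    have hψ2t := hψpos' (2 * t) (by linarith) h2t1
    have hφub : a * φ t ≤ φ (2 * t) := by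
      rw [lt_div_iff₀ hφt] at h2; linarith
    have hψub : ψ (2 * t) ≤ b * ψ t := by
      rw [div_lt_iff₀ hψt] at h1; linarith
    have heq : c * g t = (a * φ t) / (b * ψ t) := by
      rw [hgx, hcdef, div_mul_div_comm]
    rw [heq, hgx, div_le_div_iff₀ (by positivity) hψ2t]
    nlinarith [hφpos' (2 * t) (by linarith) h2t1]
  -- chain upwards
  have hChain : ∀ n : ℕ, ∀ t, 0 < t → 2 ^ n * t ≤ 2 * δ → c ^ n * g t ≤ g (2 ^ n * t) := by
    intro n
    induction n with
    | zero => intro t ht _; simp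
    | succ n ih =>
      intro t ht hle
      have h2n : (0:ℝ) < 2 ^ n := by positivity
      have hle' : 2 ^ n * t ≤ 2 * δ := by
        have he : (2:ℝ) ^ (n + 1) = 2 * 2 ^ n := by ring
        rw [he] at hle
        nlinarith [mul_pos h2n ht]
      have hnt : 2 ^ n * t ≤ δ := by
        have : (2:ℝ) ^ (n + 1) = 2 * 2 ^ n := by ring
        rw [this] at hle; nlinarith
      have h1 := ih t ht hle'
      have h2 := hIdx (2 ^ n * t) (by positivity) hnt
      have heq : (2:ℝ) ^ (n + 1) * t = 2 * (2 ^ n * t) := by ring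
      rw [heq]
      calc c ^ (n + 1) * g t = c * (c ^ n * g t) := by ring
        _ ≤ c * g (2 ^ n * t) := by nlinarith
        _ ≤ g (2 * (2 ^ n * t)) := h2
  -- almost increasing up to 2δ
  have hAI : ∀ s x, 0 < s → s ≤ x → x ≤ 2 * δ → g s ≤ 2 * g x := by
    have haux : ∀ n : ℕ, ∀ s x, 0 < s → s ≤ x → x ≤ 2 * δ → x ≤ 2 ^ n * s →
        g s ≤ 2 * g x := by
      intro n
      induction n with
      | zero =>
        intro s x hs hsx hx2 hxn
        have hxs : x = s := le_antisymm (by simpa using hxn) hsx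
        subst hxs
        have := hgpos x hs (by linarith [hδhalf])
        linarith
      | succ n ih =>
        intro s x hs hsx hx2 hxn
        by_cases hcase : x ≤ 2 * s
        · exact hAdj s x hs hsx (by linarith [hδhalf]) hcase
        · push_neg at hcase
          have hsδ : s ≤ δ := by linarith
          have hgs := hgpos s hs (by linarith [hδhalf])
          have h1 : g s ≤ g (2 * s) := by
            have := hIdx s hs hsδ; nlinarith
          have h2 : g (2 * s) ≤ 2 * g x := by
            apply ih (2 * s) x (by linarith) hcase.le hx2
            have : (2:ℝ) ^ (n + 1) * s = 2 ^ n * (2 * s) := by ring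
            rw [this] at hxn; exact hxn
          linarith
    intro s x hs hsx hx2
    obtain ⟨n, hn⟩ := pow_unbounded_of_one_lt (x / s) (show (1:ℝ) < 2 by norm_num)
    refine haux n s x hs hsx hx2 ?_
    rw [div_lt_iff₀ hs] at hn
    nlinarith
  -- global upper bound G
  have h2δ1 : 2 * δ ≤ 1 := by linarith [hδhalf]
  have hg2δ := hgpos (2 * δ) (by linarith) h2δ1
  obtain ⟨G, hG0, hGbd⟩ : ∃ G, 0 < G ∧ ∀ t, 0 < t → t ≤ 1 → g t ≤ G := by
    refine ⟨2 * g (2 * δ) + g (2 * δ) / (2 * δ), by positivity, ?_⟩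
    intro t ht ht1
    have hpos : 0 ≤ g (2 * δ) / (2 * δ) := by positivity
    by_cases hcase : t ≤ 2 * δ
    · have h := hAI t (2 * δ) ht hcase (le_refl _)
      linarith
    · push_neg at hcase
      have h1 := hP1 (2 * δ) t (by linarith) hcase.le ht1
      have h2 : g t ≤ g (2 * δ) / (2 * δ) := by
        rw [le_div_iff₀ (by linarith : (0:ℝ) < 2 * δ)]
        nlinarith [hgpos t ht ht1]
      nlinarith
  -- global lower bound m on [2δ, 1]
  obtain ⟨m, hm0, hmlb⟩ : ∃ m, 0 < m ∧ ∀ x, 2 * δ ≤ x → x ≤ 1 → m ≤ g x := by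
    have hψ1 : 0 < ψ 1 := hψpos' 1 one_pos le_rfl
    refine ⟨φ (2 * δ) / ψ 1, div_pos (hφpos' (2 * δ) (by linarith) h2δ1) hψ1, ?_⟩
    intro x hx1 hx2
    have hx0 : 0 < x := by linarith
    have hφm : φ (2 * δ) ≤ φ x := hmonoφ (hmemI _ (by linarith) h2δ1) (hmemI _ hx0.le hx2) hx1
    have hψm : ψ x ≤ ψ 1 := hmonoψ (hmemI _ hx0.le hx2) (hmemI _ zero_le_one le_rfl) hx2
    rw [hgx, div_le_div_iff₀ hψ1 (hψpos' x hx0 hx2)]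
    nlinarith [hφpos' (2 * δ) (by linarith) h2δ1, hψpos' x hx0 hx2]
  -- global almost increasing constant
  obtain ⟨Ca, hCa2, hCA⟩ : ∃ Ca, 2 ≤ Ca ∧ ∀ s x, 0 < s → s ≤ x → x ≤ 1 → g s ≤ Ca * g x := by
    refine ⟨2 + G / m, by nlinarith [div_pos hG0 hm0], ?_⟩
    intro s x hs hsx hx1
    have hgx0 := hgpos x (lt_of_lt_of_le hs hsx) hx1
    by_cases hcase : x ≤ 2 * δ
    · have h := hAI s x hs hsx hcase
      nlinarith [mul_pos (div_pos hG0 hm0) hgx0]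
    · push_neg at hcase
      have h1 : g s ≤ G := hGbd s hs (le_trans hsx hx1)
      have h2 : m ≤ g x := hmlb x hcase.le hx1
      have h3 : G / m * m ≤ G / m * g x := mul_le_mul_of_nonneg_left h2 (by positivity)
      rw [div_mul_cancel₀ _ (ne_of_gt hm0)] at h3
      nlinarith
  have hCa0 : (0:ℝ) < Ca := by linarith
  -- g tends to 0 near 0
  have hsmall : ∀ ε, 0 < ε → ∃ η, 0 < η ∧ ∀ t, 0 < t → t ≤ η → g t ≤ ε := by
    intro ε hε
    obtain ⟨n, hn⟩ := pow_unbounded_of_one_lt (G / ε) hc1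
    refine ⟨2 * δ / 2 ^ n, by positivity, ?_⟩
    intro t ht htη
    have h2n : (0:ℝ) < 2 ^ n := by positivity
    have hle : 2 ^ n * t ≤ 2 * δ := by
      rw [le_div_iff₀ h2n] at htη; nlinarith
    have h1 := hChain n t ht hle
    have h2 : g (2 ^ n * t) ≤ G := hGbd _ (by positivity) (by linarith)
    have hcn : (0:ℝ) < c ^ n := by positivity
    have h3 : g t ≤ G / c ^ n := by
      rw [le_div_iff₀ hcn]; nlinarith
    have h4 : G / c ^ n ≤ ε := by
      rw [div_le_iff₀ hcn]
      rw [div_lt_iff₀ hε] at hn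
      nlinarith
    linarith
  -- the envelope g₁
  set g₁ : ℝ → ℝ := stmt8g₁ g with hg₁def
  have hPG : ((0:ℝ), G) ∈ stmt8Aff g := by
    refine ⟨le_refl _, hG0.le, ?_⟩
    intro t ht ht1
    simpa using hGbd t ht ht1
  have hne : (stmt8Aff g).Nonempty := ⟨(0, G), hPG⟩
  have hg₁le : ∀ x, 0 ≤ x → ∀ p q, (p, q) ∈ stmt8Aff g → g₁ x ≤ p * x + q :=
    fun x hx p q h => stmt8g₁_le g hx h
  have hg₁nonneg : ∀ x, 0 ≤ x → 0 ≤ g₁ x := by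
    intro x hx
    apply stmt8g₁_ge g hne
    rintro p q ⟨hp, hq, -⟩
    nlinarith
  have hg₁ge : ∀ x, 0 < x → x ≤ 1 → g x ≤ g₁ x := by
    intro x hx hx1
    apply stmt8g₁_ge g hne
    rintro p q ⟨hp, hq, hmaj⟩
    exact hmaj x hx hx1
  have hg₁pos : ∀ x, 0 < x → x ≤ 1 → 0 < g₁ x := fun x hx hx1 =>
    lt_of_lt_of_le (hgpos x hx hx1) (hg₁ge x hx hx1)
  have hg₁mono : ∀ x y, 0 ≤ x → x ≤ y → g₁ x ≤ g₁ y := by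
    intro x y hx hxy
    apply stmt8g₁_ge g hne
    rintro p q hpq
    refine le_trans (hg₁le x hx p q hpq) ?_
    nlinarith [hpq.1]
  -- upper comparison: g₁ x ≤ (Ca + 1) * g x
  obtain ⟨K, hK3, hK0, hKCa, hg₁K⟩ :
      ∃ K : ℝ, 3 ≤ K ∧ 0 < K ∧ K = Ca + 1 ∧ ∀ x, 0 < x → x ≤ 1 → g₁ x ≤ K * g x := by
    refine ⟨Ca + 1, by linarith, by linarith, rfl, ?_⟩
    intro x hx hx1
    have hgx0 := hgpos x hx hx1
    have hPx : (g x / x, Ca * g x) ∈ stmt8Aff g := by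
      refine ⟨by positivity, by positivity, ?_⟩
      intro t ht ht1
      by_cases hcase : t ≤ x
      · have h1 : g t ≤ Ca * g x := hCA t x ht hcase hx1
        have h2 : 0 ≤ g x / x * t := by positivity
        linarith
      · push_neg at hcase
        have h1 : x * g t ≤ t * g x := hP1 x t hx hcase.le ht1
        have h2 : g t ≤ g x / x * t := by
          rw [div_mul_eq_mul_div, le_div_iff₀ hx]
          nlinarith
        have h3 : 0 ≤ Ca * g x := by positivity
        linarith
    have h := hg₁le x hx.le _ _ hPx
    have heq : g x / x * x + Ca * g x = (Ca + 1) * g x := by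
      field_simp
      ring
    linarith [heq ▸ h]
  -- concavity
  have hconcg₁ : ConcaveOn ℝ (Icc 0 1) g₁ := by
    refine ⟨convex_Icc 0 1, ?_⟩
    intro x hx y hy p q hp hq hpq
    apply stmt8g₁_ge g hne
    rintro pa qa hpq'
    have h1 := hg₁le x hx.1 pa qa hpq'
    have h2 := hg₁le y hy.1 pa qa hpq'
    have h3 : p * g₁ x + q * g₁ y ≤ p * (pa * x + qa) + q * (pa * y + qa) :=
      add_le_add (mul_le_mul_of_nonneg_left h1 hp) (mul_le_mul_of_nonneg_left h2 hq)
    have heq : p * (pa * x + qa) + q * (pa * y + qa) = pa * (p * x + q * y) + qa := by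
      linear_combination qa * hpq
    simp only [smul_eq_mul]
    linarith [heq ▸ h3]
  -- g₁ 0 = 0
  have hg₁0 : g₁ 0 = 0 := by
    refine le_antisymm ?_ (hg₁nonneg 0 le_rfl)
    apply le_of_forall_pos_le_add
    intro ε hε
    obtain ⟨η, hη, hηbd⟩ := hsmall ε hε
    have hPε : (G / η, ε) ∈ stmt8Aff g := by
      refine ⟨by positivity, hε.le, ?_⟩
      intro t ht ht1
      by_cases hcase : t ≤ η
      · have h1 := hηbd t ht hcase
        have h2 : 0 ≤ G / η * t := by positivity
        linarith
      · push_neg at hcase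
        have h1 : g t ≤ G := hGbd t ht ht1
        have h2 : G ≤ G / η * t := by
          rw [div_mul_eq_mul_div, le_div_iff₀ hη]
          nlinarith
        linarith
    have h := hg₁le 0 le_rfl _ _ hPε
    simpa using h
  -- sublinearity of g₁
  have hq₁ : ∀ s x, 0 ≤ s → s ≤ x → x ≤ 1 → 0 < x → s * g₁ x ≤ x * g₁ s := by
    intro s x hs hsx hx1 hx
    have ha : (0:ℝ) ≤ s / x := by positivity
    have hb : (0:ℝ) ≤ 1 - s / x := by
      have h : s / x ≤ 1 := by rw [div_le_one hx]; exact hsx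
      linarith
    have h := hconcg₁.2 (hmemI x hx.le hx1) (hmemI 0 le_rfl zero_le_one) ha hb (by ring)
    have hpt : (s / x) • x + (1 - s / x) • (0:ℝ) = s := by
      simp only [smul_eq_mul, mul_zero, add_zero]; exact div_mul_cancel₀ s hx.ne'
    rw [hpt] at h
    have h' : (s / x) * g₁ x ≤ g₁ s := by simpa [hg₁0, smul_eq_mul] using h
    have h2 := mul_le_mul_of_nonneg_left h' hx.le
    calc s * g₁ x = x * ((s / x) * g₁ x) := by field_simp
      _ ≤ x * g₁ s := h2
  -- continuity
  have hcontg₁ : ContinuousOn g₁ (Icc 0 1) := by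
    intro p hp
    rcases eq_or_lt_of_le hp.1 with h0 | hppos
    · -- p = 0
      rw [Metric.continuousWithinAt_iff]
      intro ε hε
      have hK1 : (0:ℝ) < K + 1 := by linarith
      obtain ⟨η, hη, hηbd⟩ := hsmall (ε / (K + 1)) (by positivity)
      refine ⟨η, hη, ?_⟩
      intro x hx hdist
      rw [Real.dist_eq, ← h0, sub_zero] at hdist
      rw [Real.dist_eq, ← h0, hg₁0, sub_zero]
      rcases eq_or_lt_of_le hx.1 with hx0 | hx0
      · rw [← hx0, hg₁0]; simpa using hε
      · have habs : |x| = x := abs_of_pos hx0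
        rw [habs] at hdist
        have h1 := hg₁K x hx0 hx.2
        have h2 := hηbd x hx0 hdist.le
        have h3 := hg₁nonneg x hx0.le
        rw [abs_of_nonneg h3]
        have h4 : g₁ x ≤ K * (ε / (K + 1)) := by
          have := mul_le_mul_of_nonneg_left h2 hK0.le
          linarith
        have hlt : K * (ε / (K + 1)) < ε := by
          rw [mul_div_assoc', div_lt_iff₀ hK1]
          linarith
        linarith
    · -- p > 0
      rw [Metric.continuousWithinAt_iff]
      intro ε hε
      have hg₁p := hg₁pos p hppos hp.2
      refine ⟨ε * p / (g₁ p + 1), by positivity, ?_⟩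
      intro x hx hdist
      rw [Real.dist_eq] at hdist ⊢
      have key : |g₁ x - g₁ p| ≤ g₁ p / p * |x - p| := by
        rcases le_total x p with hxp | hpx
        · have h1 : g₁ x ≤ g₁ p := hg₁mono x p hx.1 hxp
          have h2 : x * g₁ p ≤ p * g₁ x := hq₁ x p hx.1 hxp hp.2 hppos
          rw [abs_of_nonpos (by linarith), abs_of_nonpos (by linarith)]
          rw [div_mul_eq_mul_div, le_div_iff₀ hppos]
          linarith
        · have h1 : g₁ p ≤ g₁ x := hg₁mono p x hppos.le hpx
          have h2 : p * g₁ x ≤ x * g₁ p := hq₁ p x hppos.le hpx hx.2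
            (lt_of_lt_of_le hppos hpx)
          rw [abs_of_nonneg (by linarith), abs_of_nonneg (by linarith)]
          rw [div_mul_eq_mul_div, le_div_iff₀ hppos]
          linarith
      have hpos : 0 < g₁ p / p := by positivity
      have h4 : g₁ p / p * |x - p| < g₁ p / p * (ε * p / (g₁ p + 1)) :=
        mul_lt_mul_of_pos_left hdist hpos
      have h5 : g₁ p / p * (ε * p / (g₁ p + 1)) < ε := by
        rw [div_mul_div_comm, div_lt_iff₀ (by positivity)]
        have h6 : 0 < ε * p := mul_pos hε hppos
        linarith [h6]
      calc |g₁ x - g₁ p| ≤ g₁ p / p * |x - p| := key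
        _ < g₁ p / p * (ε * p / (g₁ p + 1)) := h4
        _ < ε := h5
  -- the liminf condition
  obtain ⟨n, hn⟩ := pow_unbounded_of_one_lt K hc1
  have hn1 : 1 ≤ n := by
    rcases Nat.eq_zero_or_pos n with h | h
    · exfalso; rw [h, pow_zero] at hn; linarith
    · exact h
  have h2n2 : (2:ℝ) ≤ 2 ^ n := by
    calc (2:ℝ) = 2 ^ 1 := (pow_one 2).symm
      _ ≤ 2 ^ n := pow_le_pow_right₀ (by norm_num) hn1
  have h2n1 : (0:ℝ) < 2 ^ n - 1 := by linarith
  have h2n1' : (2:ℝ) ^ n - 1 ≠ 0 := ne_of_gt h2n1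
  obtain ⟨lam, hlam0, hlam1, hlamdef⟩ :
      ∃ lam : ℝ, 0 < lam ∧ lam ≤ 1 ∧ lam = 1 / (2 ^ n - 1) := by
    refine ⟨1 / (2 ^ n - 1), by positivity, ?_, rfl⟩
    rw [div_le_one h2n1]; linarith
  have hcnK : 1 < c ^ n / K := by rw [lt_div_iff₀ hK0]; linarith
  obtain ⟨eta, heta0, hetadef⟩ : ∃ eta : ℝ, 0 < eta ∧ eta = lam * (c ^ n / K - 1) :=
    ⟨lam * (c ^ n / K - 1), mul_pos hlam0 (by linarith), rfl⟩
  have hliminf : 1 < liminf (fun t => g₁ (2 * t) / g₁ t) (nhdsWithin (0:ℝ) (Ioi 0)) := by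
    have hcb : IsCoboundedUnder (· ≥ ·) (nhdsWithin (0:ℝ) (Ioi 0))
        (fun t => g₁ (2 * t) / g₁ t) := by
      apply IsBoundedUnder.isCoboundedUnder_ge
      refine ⟨2, ?_⟩
      rw [eventually_map]
      filter_upwards [Ioc_mem_nhdsGT (show (0:ℝ) < 1/2 by norm_num)] with t ht
      have ht0 : 0 < t := ht.1
      have ht1 : t ≤ 1 := by linarith [ht.2]
      have h2t1 : 2 * t ≤ 1 := by linarith [ht.2]
      have h := hq₁ t (2 * t) ht0.le (by linarith) h2t1 (by linarith)
      rw [div_le_iff₀ (hg₁pos t ht0 ht1)]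
      have h' : t * g₁ (2 * t) ≤ t * (2 * g₁ t) := by linarith
      exact le_of_mul_le_mul_left h' ht0
    have hev : ∀ᶠ t in nhdsWithin (0:ℝ) (Ioi 0), 1 + eta ≤ g₁ (2 * t) / g₁ t := by
      have hτ0 : (0:ℝ) < 2 * δ / 2 ^ n := by positivity
      filter_upwards [Ioc_mem_nhdsGT hτ0] with t ht
      have ht0 : 0 < t := ht.1
      have h2npos : (0:ℝ) < 2 ^ n := by positivity
      have hlen : 2 ^ n * t ≤ 2 * δ := by
        have h := ht.2
        rw [le_div_iff₀ h2npos] at h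
        linarith
      have hmul := mul_le_mul_of_nonneg_left h2n2 ht0.le
      have htn : t ≤ 2 ^ n * t := by linarith [hmul, ht0]
      have hnt1 : 2 ^ n * t ≤ 1 := by linarith [h2δ1]
      have ht1 : t ≤ 1 := le_trans htn hnt1
      have h2t1 : 2 * t ≤ 1 := by linarith [hmul, hlen, h2δ1]
      have hmem1 : (2:ℝ) ^ n * t ∈ Icc (0:ℝ) 1 := ⟨by positivity, hnt1⟩
      have hmemt : t ∈ Icc (0:ℝ) 1 := ⟨ht0.le, ht1⟩
      have hw2 : 0 ≤ 1 - lam := by linarith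
      have h := hconcg₁.2 hmem1 hmemt hlam0.le hw2 (by ring)
      have hpt : lam • ((2:ℝ) ^ n * t) + (1 - lam) • t = 2 * t := by
        rw [smul_eq_mul, smul_eq_mul, hlamdef]
        field_simp
        ring
      rw [hpt] at h
      have hA := hChain n t ht0 hlen
      have hB := hg₁ge (2 ^ n * t) (by positivity) hnt1
      have hC := hg₁K t ht0 ht1
      have hg₁t := hg₁pos t ht0 ht1
      have hcn0 : (0:ℝ) < c ^ n := by positivity
      have hKg : g₁ t / K ≤ g t := by rw [div_le_iff₀ hK0]; linarith
      have hlow : c ^ n / K * g₁ t ≤ g₁ (2 ^ n * t) := by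
        calc c ^ n / K * g₁ t = c ^ n * (g₁ t / K) := by ring
          _ ≤ c ^ n * g t := mul_le_mul_of_nonneg_left hKg hcn0.le
          _ ≤ g (2 ^ n * t) := hA
          _ ≤ g₁ (2 ^ n * t) := hB
      rw [le_div_iff₀ hg₁t]
      have hcomb : lam * (c ^ n / K * g₁ t) + (1 - lam) * g₁ t ≤ g₁ (2 * t) := by
        refine le_trans ?_ h
        simp only [smul_eq_mul]
        have h6 := mul_le_mul_of_nonneg_left hlow hlam0.le
        linarith
      have heq2 : (1 + eta) * g₁ t = lam * (c ^ n / K * g₁ t) + (1 - lam) * g₁ t := by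
        rw [hetadef]; ring
      linarith [heq2 ▸ hcomb]
    calc (1:ℝ) < 1 + eta := by linarith
      _ ≤ _ := le_liminf_of_le hcb hev
  refine ⟨g₁, hcontg₁, hconcg₁, ?_, hg₁0, ?_, hliminf, 1 / K, 1, by positivity, one_pos, ?_⟩
  · intro x hx y hy hxy
    exact hg₁mono x y hx.1 hxy
  · intro x hx
    exact hg₁pos x hx.1 hx.2
  · intro x hx
    have h1 := hg₁K x hx.1 hx.2
    have h2 := hg₁ge x hx.1 hx.2
    have hgeq : g x = φ x / ψ x := hgx x
    constructor
    · rw [← hgeq, div_mul_eq_mul_div, div_le_iff₀ hK0]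
      linarith
    · rw [← hgeq, one_mul]
      exact h2
end

section
/- Let 1 ≤ θ₁, θ₂ < ∞ and let (a_k)_{k∈ℕ} be positive reals satisfying ∑_{k=n}^{∞} a_k ≤ C a_n for all n. Let (b_{k₁,k₂}) be positive reals indexed by ℕ². Then ∑_{n₂} a_{n₂} [∑_{n₁} a_{n₁} (∑_{k₂=0}^{n₂} ∑_{k₁=0}^{n₁} b_{k₁,k₂})^{θ₁}]^{θ₂/θ₁} ≤ C' ∑_{n₂} a_{n₂} [∑_{n₁} a_{n₁} b_{n₁,n₂}^{θ₁}]^{θ₂/θ₁}, where C' depends only on C, θ₁, θ₂. -/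
open scoped ENNReal
open Finset MeasureTheory

set_option maxHeartbeats 1000000


lemma jensen_sum (θ : ℝ) (hθ : 1 ≤ θ) (s : Finset ℕ) (w c : ℕ → ℝ≥0∞)
    (hw0 : ∀ k ∈ s, w k ≠ 0) (hwt : ∀ k ∈ s, w k ≠ ⊤) :
    (∑ k ∈ s, c k) ^ θ ≤ (∑ k ∈ s, w k) ^ (θ - 1) * ∑ k ∈ s, w k ^ (1 - θ) * c k ^ θ := by
  have hθ0 : (0:ℝ) < θ := lt_of_lt_of_le one_pos hθ
  rcases s.eq_empty_or_nonempty with rfl | hs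
  · simp [ENNReal.zero_rpow_of_pos hθ0]
  set S : ℝ≥0∞ := ∑ k ∈ s, w k with hS
  have hS0 : S ≠ 0 := by
    obtain ⟨k, hk⟩ := hs
    intro h
    exact hw0 k hk (by simpa using (Finset.sum_eq_zero_iff.mp h) k hk)
  have hSt : S ≠ ⊤ := by
    simp only [hS, ne_eq, ENNReal.sum_eq_top, not_exists]
    rintro k ⟨hk, ht⟩; exact hwt k hk ht
  have hS1 : (S:ℝ≥0∞) ^ (θ-1) ≠ 0 := by
    simp [ENNReal.rpow_eq_zero_iff, hS0, hSt]
  by_cases hc : ∃ k ∈ s, c k = ⊤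
  · obtain ⟨k, hk, hck⟩ := hc
    have hterm : w k ^ (1 - θ) * c k ^ θ = ⊤ := by
      rw [hck, ENNReal.top_rpow_of_pos hθ0, ENNReal.mul_top]
      simp [ENNReal.rpow_eq_zero_iff, hw0 k hk, hwt k hk]
    have : ∑ k ∈ s, w k ^ (1 - θ) * c k ^ θ = ⊤ :=
      ENNReal.sum_eq_top.mpr ⟨k, hk, hterm⟩
    rw [this, ENNReal.mul_top hS1]
    exact le_top
  push_neg at hc
  have key := ENNReal.rpow_arith_mean_le_arith_mean_rpow s (fun k => w k / S)
      (fun k => c k / w k) (by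
        simp only [div_eq_mul_inv, ← Finset.sum_mul]
        rw [← div_eq_mul_inv, ENNReal.div_self hS0 hSt]) hθ
  have hL : ∀ k ∈ s, w k / S * (c k / w k) = c k * S⁻¹ := by
    intro k hk
    rw [div_eq_mul_inv, div_eq_mul_inv]
    calc w k * S⁻¹ * (c k * (w k)⁻¹) = c k * S⁻¹ * (w k * (w k)⁻¹) := by ring
      _ = c k * S⁻¹ := by rw [ENNReal.mul_inv_cancel (hw0 k hk) (hwt k hk), mul_one]
  have hww : ∀ k ∈ s, w k * (w k ^ θ)⁻¹ = w k ^ (1-θ) := by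
    intro k hk
    rw [← ENNReal.rpow_neg, show (1:ℝ) - θ = 1 + -θ by ring,
      ENNReal.rpow_add _ _ (hw0 k hk) (hwt k hk), ENNReal.rpow_one]
  have hR : ∀ k ∈ s, w k / S * (c k / w k) ^ θ = w k ^ (1-θ) * c k ^ θ * S⁻¹ := by
    intro k hk
    rw [ENNReal.div_rpow_of_nonneg _ _ hθ0.le, div_eq_mul_inv, div_eq_mul_inv]
    calc w k * S⁻¹ * (c k ^ θ * (w k ^ θ)⁻¹)
        = w k * (w k ^ θ)⁻¹ * c k ^ θ * S⁻¹ := by ring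
      _ = w k ^ (1-θ) * c k ^ θ * S⁻¹ := by rw [hww k hk]
  rw [Finset.sum_congr rfl hL, Finset.sum_congr rfl hR, ← Finset.sum_mul, ← Finset.sum_mul,
    ENNReal.mul_rpow_of_nonneg _ _ hθ0.le] at key
  -- key : (∑ c)^θ * (S⁻¹)^θ ≤ (∑ w^{1-θ} c^θ) * S⁻¹
  have hSθt : S ^ θ ≠ ⊤ := ENNReal.rpow_ne_top_of_nonneg hθ0.le hSt
  have h2 : (∑ k ∈ s, c k) ^ θ * (S⁻¹) ^ θ * S ^ θ ≤
      (∑ k ∈ s, w k ^ (1 - θ) * c k ^ θ) * S⁻¹ * S ^ θ :=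
    mul_le_mul_left key _
  have hinv : (S⁻¹) ^ θ * S ^ θ = 1 := by
    rw [ENNReal.inv_rpow, ENNReal.inv_mul_cancel (by simp [ENNReal.rpow_eq_zero_iff, hS0, hSt]) hSθt]
  have hS' : S⁻¹ * S ^ θ = S ^ (θ - 1) := by
    rw [← ENNReal.rpow_neg_one S, ← ENNReal.rpow_add _ _ hS0 hSt,
      show (-1:ℝ) + θ = θ - 1 by ring]
  calc (∑ k ∈ s, c k) ^ θ = (∑ k ∈ s, c k) ^ θ * ((S⁻¹) ^ θ * S ^ θ) := by rw [hinv, mul_one]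
    _ = (∑ k ∈ s, c k) ^ θ * (S⁻¹) ^ θ * S ^ θ := by ring
    _ ≤ (∑ k ∈ s, w k ^ (1 - θ) * c k ^ θ) * S⁻¹ * S ^ θ := h2
    _ = S ^ (θ - 1) * ∑ k ∈ s, w k ^ (1 - θ) * c k ^ θ := by rw [mul_assoc, hS', mul_comm]


lemma tsum_as_lintegral (a g : ℕ → ℝ≥0∞) :
    ∫⁻ n, g n ∂(Measure.count.withDensity a) = ∑' n, a n * g n := by
  rw [lintegral_withDensity_eq_lintegral_mul _ (measurable_from_top) (measurable_from_top),
    lintegral_count]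
  rfl

lemma minkowski_sum (θ : ℝ) (hθ : 1 ≤ θ) (a : ℕ → ℝ≥0∞) (s : Finset ℕ) (f : ℕ → ℕ → ℝ≥0∞) :
    (∑' n, a n * (∑ k ∈ s, f k n) ^ θ) ^ (1/θ) ≤
      ∑ k ∈ s, (∑' n, a n * f k n ^ θ) ^ (1/θ) := by
  classical
  have hθ0 : (0:ℝ) < θ := lt_of_lt_of_le one_pos hθ
  induction s using Finset.induction_on with
  | empty =>
    simp [hθ0, ENNReal.zero_rpow_of_pos hθ0, ENNReal.zero_rpow_of_pos (by positivity : (0:ℝ) < 1/θ)]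
  | insert _ _ hk ih =>
    rename_i k s'
    rw [Finset.sum_insert hk]
    calc (∑' n, a n * (∑ j ∈ insert k s', f j n) ^ θ) ^ (1/θ)
        = (∫⁻ n, (fun m => f k m + ∑ j ∈ s', f j m) n ^ θ ∂(Measure.count.withDensity a)) ^ (1/θ) := by
          rw [tsum_as_lintegral]
          congr 1
          exact tsum_congr fun n => by rw [Finset.sum_insert hk]
      _ ≤ (∫⁻ n, f k n ^ θ ∂(Measure.count.withDensity a)) ^ (1/θ) +
          (∫⁻ n, (∑ j ∈ s', f j n) ^ θ ∂(Measure.count.withDensity a)) ^ (1/θ) :=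
          ENNReal.lintegral_Lp_add_le (measurable_from_top).aemeasurable
            (measurable_from_top).aemeasurable hθ
      _ ≤ (∑' n, a n * f k n ^ θ) ^ (1/θ) + ∑ j ∈ s', (∑' n, a n * f j n ^ θ) ^ (1/θ) := by
          rw [tsum_as_lintegral, tsum_as_lintegral]
          exact add_le_add_right ih _


lemma swap_tsum (F : ℕ → ℕ → ℝ≥0∞) :
    ∑' n, ∑ k ∈ Finset.range (n+1), F n k = ∑' k, ∑' j, F (k+j) k := by
  have h1 : ∀ n, ∑ k ∈ Finset.range (n+1), F n k
      = ∑' k, if k ≤ n then F n k else 0 := by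
    intro n
    rw [tsum_eq_sum (s := Finset.range (n+1)) (by
      intro k hk
      rw [if_neg]
      simpa [Nat.lt_succ_iff] using hk)]
    exact Finset.sum_congr rfl fun k hk => by
      rw [if_pos (Nat.lt_succ_iff.mp (Finset.mem_range.mp hk))]
  calc ∑' n, ∑ k ∈ Finset.range (n+1), F n k
      = ∑' n, ∑' k, if k ≤ n then F n k else 0 := tsum_congr h1
    _ = ∑' k, ∑' n, if k ≤ n then F n k else 0 := ENNReal.tsum_comm
    _ = ∑' k, ∑' j, F (k+j) k := by
        refine tsum_congr fun k => ?_
        have hinj : Function.Injective (fun j : ℕ => k + j) := fun x y h => by simpa using h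
        rw [← Function.Injective.tsum_eq hinj (f := fun n => if k ≤ n then F n k else 0) (by
          intro n hn
          rw [Function.mem_support] at hn
          by_contra h
          rw [if_neg (by
            intro hkn
            exact h ⟨n - k, by simp; omega⟩)] at hn
          exact hn rfl)]
        exact tsum_congr fun j => by simp

lemma hardy1 (θ : ℝ) (hθ : 1 ≤ θ) (a : ℕ → ℝ≥0∞) (ha' : ∀ k, a k ≠ ⊤)
    (C : ℝ≥0∞) (hC1 : 1 ≤ C) (hCtop : C ≠ ⊤)
    (hHardy : ∀ n, ∑' k, a (n + k) ≤ C * a n) :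
    ∃ C' : ℝ≥0∞, 0 < C' ∧ C' ≠ ⊤ ∧ ∀ c : ℕ → ℝ≥0∞,
      ∑' n, a n * (∑ k ∈ Finset.range (n+1), c k) ^ θ ≤ C' * ∑' n, a n * c n ^ θ := by
  have hθ0 : (0:ℝ) < θ := lt_of_lt_of_le one_pos hθ
  have hC0 : C ≠ 0 := fun h => by simp [h] at hC1
  -- the ratio q
  set q : ℝ≥0∞ := 1 - (2*C)⁻¹ with hq
  have h2C0 : (2*C) ≠ 0 := by simp [hC0]
  have h2Ct : (2*C) ≠ ⊤ := ENNReal.mul_ne_top (by norm_num) hCtop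
  have hinv0 : (2*C)⁻¹ ≠ 0 := ENNReal.inv_ne_zero.mpr h2Ct
  have hinvle : (2*C)⁻¹ ≤ 2⁻¹ :=
    ENNReal.inv_le_inv' (le_mul_of_one_le_right (by norm_num) hC1)
  have hq0 : q ≠ 0 := by
    rw [hq, ne_eq, tsub_eq_zero_iff_le]
    intro h
    exact absurd (h.trans hinvle) (not_le.mpr (ENNReal.inv_lt_one.mpr ENNReal.one_lt_two))
  have hq1 : q < 1 := ENNReal.sub_lt_self ENNReal.one_ne_top one_ne_zero hinv0
  have hqt : q ≠ ⊤ := (lt_of_lt_of_le hq1 le_top).ne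
  -- decay of tails
  set A : ℕ → ℝ≥0∞ := fun n => ∑' k, a (n + k) with hA
  have hAt : ∀ n, A n ≠ ⊤ :=
    fun n => ((hHardy n).trans_lt (lt_top_iff_ne_top.mpr (ENNReal.mul_ne_top hCtop (ha' n)))).ne
  have haA : ∀ n, a n ≤ A n := fun n => by
    simpa using ENNReal.le_tsum (f := fun k => a (n+k)) 0
  have hstep : ∀ n, A (n+1) ≤ q * A n := by
    intro n
    have hsplit : A n = a n + A (n+1) := by
      have h0 : ∑' k, a (n + k) = a (n + 0) + ∑' k, a (n + (k+1)) :=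
        tsum_eq_zero_add' ENNReal.summable
      have h1 : ∑' k, a (n + (k+1)) = ∑' k, a ((n+1) + k) :=
        tsum_congr fun k => by rw [show n + (k+1) = (n+1)+k by omega]
      show (∑' k, a (n + k)) = a n + ∑' k, a ((n+1) + k)
      rw [h0, h1, Nat.add_zero]
    have hle : A n * (2*C)⁻¹ ≤ a n := by
      have hCC : C * (2*C)⁻¹ ≤ 1 := by
        calc C * (2*C)⁻¹ ≤ C * C⁻¹ :=
              mul_le_mul_right (ENNReal.inv_le_inv' (le_mul_of_one_le_left zero_le (by norm_num))) _
          _ = 1 := ENNReal.mul_inv_cancel hC0 hCtop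
      calc A n * (2*C)⁻¹ ≤ (C * a n) * (2*C)⁻¹ := mul_le_mul_left (hHardy n) _
        _ = a n * (C * (2*C)⁻¹) := by ring
        _ ≤ a n * 1 := mul_le_mul_right hCC _
        _ = a n := mul_one _
    have h1 : A (n+1) ≤ A n - A n * (2*C)⁻¹ := by
      apply ENNReal.le_sub_of_add_le_right (ENNReal.mul_ne_top (hAt n) (ENNReal.inv_ne_top.mpr h2C0))
      calc A (n+1) + A n * (2*C)⁻¹ ≤ A (n+1) + a n := add_le_add_right hle _
        _ = A n := by rw [hsplit, add_comm]
    calc A (n+1) ≤ A n - A n * (2*C)⁻¹ := h1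
      _ = (1 - (2*C)⁻¹) * A n := by
          rw [ENNReal.sub_mul (fun _ _ => hAt n), one_mul, mul_comm]
  have hdecay : ∀ k j, a (k + j) ≤ C * (q ^ j * a k) := by
    intro k j
    have hAj : ∀ j, A (k + j) ≤ q ^ j * A k := by
      intro j
      induction j with
      | zero => simp
      | succ j ih =>
        calc A (k + (j+1)) = A ((k+j) + 1) := by rw [show k+(j+1) = (k+j)+1 by omega]
          _ ≤ q * A (k+j) := hstep _
          _ ≤ q * (q^j * A k) := mul_le_mul_right ih _
          _ = q^(j+1) * A k := by ring
    calc a (k+j) ≤ A (k+j) := haA _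
      _ ≤ q ^ j * A k := hAj j
      _ ≤ q ^ j * (C * a k) := mul_le_mul_right (hHardy k) _
      _ = C * (q ^ j * a k) := by ring
  -- the auxiliary base ρ and σ = ρ^(θ-1)
  set ρ : ℝ≥0∞ := q ^ (-(2*θ)⁻¹ : ℝ) with hρ
  have hρ1 : 1 < ρ :=
    ENNReal.one_lt_rpow_of_pos_of_lt_one_of_neg (pos_iff_ne_zero.mpr hq0) hq1
      (neg_lt_zero.mpr (by positivity))
  have hρt : ρ ≠ ⊤ := by
    rw [hρ, ne_eq, ENNReal.rpow_eq_top_iff]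
    push_neg
    constructor
    · intro h; exact absurd h hq0
    · intro h; exact absurd h hqt
  have hρ0 : ρ ≠ 0 := (lt_trans zero_lt_one hρ1).ne'
  set σ : ℝ≥0∞ := ρ ^ (θ - 1 : ℝ) with hσ
  have hσ0 : σ ≠ 0 := by simp [hσ, ENNReal.rpow_eq_zero_iff, hρ0, hρt]
  have hσt : σ ≠ ⊤ := ENNReal.rpow_ne_top_of_nonneg (by linarith) hρt
  have hqσ : q * σ ≤ q ^ (2⁻¹:ℝ) := by
    have hσq : σ = q ^ (-((2*θ)⁻¹ * (θ-1))) := by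
      rw [hσ, hρ, ← ENNReal.rpow_mul, neg_mul]
    have hq1' : q * σ = q ^ (1 + -((2*θ)⁻¹ * (θ-1))) := by
      rw [ENNReal.rpow_add _ _ hq0 hqt, ENNReal.rpow_one, hσq]
    rw [hq1']
    apply ENNReal.rpow_le_rpow_of_exponent_ge hq1.le
    have h2θ : (0:ℝ) < 2*θ := by linarith
    have : (2*θ)⁻¹ * (θ-1) ≤ (2*θ)⁻¹ * θ := by
      apply mul_le_mul_of_nonneg_left (by linarith) (by positivity)
    have h2 : (2*θ)⁻¹ * θ = 2⁻¹ := by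
      field_simp
    linarith [this, h2]
  have hq2 : q ^ (2⁻¹:ℝ) < 1 := ENNReal.rpow_lt_one hq1 (by norm_num)
  set K : ℝ≥0∞ := (1 - q ^ (2⁻¹:ℝ))⁻¹ with hK
  have hK0 : K ≠ 0 := by
    rw [hK, ne_eq, ENNReal.inv_eq_zero]
    exact (tsub_le_self.trans_lt ENNReal.one_lt_top).ne
  have hKt : K ≠ ⊤ := by
    rw [hK, ne_eq, ENNReal.inv_eq_top, tsub_eq_zero_iff_le]
    exact not_le.mpr hq2
  set B : ℝ≥0∞ := (1 - ρ⁻¹)⁻¹ with hB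
  have hρinv1 : ρ⁻¹ < 1 := ENNReal.inv_lt_one.mpr hρ1
  have hB0 : B ≠ 0 := by
    rw [hB, ne_eq, ENNReal.inv_eq_zero]
    exact (tsub_le_self.trans_lt ENNReal.one_lt_top).ne
  have hBt : B ≠ ⊤ := by
    rw [hB, ne_eq, ENNReal.inv_eq_top, tsub_eq_zero_iff_le]
    exact not_le.mpr hρinv1
  have hBθ0 : B ^ (θ-1:ℝ) ≠ 0 := by simp [ENNReal.rpow_eq_zero_iff, hB0, hBt]
  have hBθt : B ^ (θ-1:ℝ) ≠ ⊤ := ENNReal.rpow_ne_top_of_nonneg (by linarith) hBt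
  -- geometric sum bound
  have hgeom : ∀ n, ∑ k ∈ Finset.range (n+1), ρ ^ k ≤ ρ ^ n * B := by
    intro n
    have hrefl : ∑ k ∈ Finset.range (n+1), ρ ^ k
        = ∑ j ∈ Finset.range (n+1), ρ ^ (n - j) :=
      (Finset.sum_range_reflect (fun k => ρ ^ k) (n+1)).symm
    have hterm : ∀ j ∈ Finset.range (n+1), ρ ^ (n - j) = ρ ^ n * (ρ⁻¹) ^ j := by
      intro j hj
      have hjn : j ≤ n := Nat.lt_succ_iff.mp (Finset.mem_range.mp hj)
      have : ρ ^ n = ρ ^ (n - j) * ρ ^ j := by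
        rw [← pow_add]
        congr 1
        omega
      rw [this, mul_assoc, ← ENNReal.inv_pow, ENNReal.mul_inv_cancel
        (pow_ne_zero j hρ0) (ENNReal.pow_ne_top hρt), mul_one]
    calc ∑ k ∈ Finset.range (n+1), ρ ^ k
        = ∑ j ∈ Finset.range (n+1), ρ ^ n * (ρ⁻¹) ^ j := by
          rw [hrefl]; exact Finset.sum_congr rfl hterm
      _ = ρ ^ n * ∑ j ∈ Finset.range (n+1), (ρ⁻¹) ^ j := by rw [← Finset.mul_sum]
      _ ≤ ρ ^ n * ∑' j, (ρ⁻¹) ^ j := mul_le_mul_right (ENNReal.sum_le_tsum _) _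
      _ = ρ ^ n * B := by rw [ENNReal.tsum_geometric, hB]
  -- conversion of powers
  have hpow : ∀ n : ℕ, (ρ ^ n : ℝ≥0∞) ^ (θ-1:ℝ) = σ ^ n := by
    intro n
    rw [← ENNReal.rpow_natCast ρ n, ← ENNReal.rpow_mul, mul_comm, ENNReal.rpow_mul,
      ENNReal.rpow_natCast]
  have hpow' : ∀ k : ℕ, (ρ ^ k : ℝ≥0∞) ^ (1-θ:ℝ) = (σ⁻¹) ^ k := by
    intro k
    rw [← ENNReal.rpow_natCast ρ k, ← ENNReal.rpow_mul,
      show (k:ℝ)*(1-θ) = -((θ-1)*k) by ring, ENNReal.rpow_neg, ENNReal.rpow_mul,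
      ENNReal.rpow_natCast, ← ENNReal.inv_pow]
  -- Jensen step
  have jens : ∀ n (c : ℕ → ℝ≥0∞), (∑ k ∈ Finset.range (n+1), c k) ^ θ ≤
      (σ ^ n * B ^ (θ-1:ℝ)) * ∑ k ∈ Finset.range (n+1), (σ⁻¹) ^ k * c k ^ θ := by
    intro n c
    have h1 := jensen_sum θ hθ (Finset.range (n+1)) (fun k => ρ ^ k) c
      (fun k _ => pow_ne_zero k hρ0) (fun k _ => ENNReal.pow_ne_top hρt)
    refine h1.trans ?_
    have hsum : (∑ k ∈ Finset.range (n+1), ρ^k) ^ (θ-1:ℝ) ≤ σ^n * B^(θ-1:ℝ) := by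
      calc (∑ k ∈ Finset.range (n+1), ρ^k) ^ (θ-1:ℝ)
          ≤ (ρ^n * B)^(θ-1:ℝ) := ENNReal.rpow_le_rpow (hgeom n) (by linarith)
        _ = (ρ^n:ℝ≥0∞)^(θ-1:ℝ) * B^(θ-1:ℝ) := ENNReal.mul_rpow_of_nonneg _ _ (by linarith)
        _ = σ^n * B^(θ-1:ℝ) := by rw [hpow]
    calc (∑ k ∈ Finset.range (n+1), (ρ:ℝ≥0∞)^k) ^ (θ-1:ℝ) * ∑ k ∈ Finset.range (n+1), ((ρ:ℝ≥0∞)^k) ^ (1-θ:ℝ) * c k ^ θ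
        ≤ (σ^n * B^(θ-1:ℝ)) * ∑ k ∈ Finset.range (n+1), ((ρ:ℝ≥0∞)^k) ^ (1-θ:ℝ) * c k ^ θ :=
          mul_le_mul_left hsum _
      _ = (σ^n * B^(θ-1:ℝ)) * ∑ k ∈ Finset.range (n+1), (σ⁻¹) ^ k * c k ^ θ := by
          congr 1
          exact Finset.sum_congr rfl fun k _ => by rw [hpow']
  -- inner geometric tail bound
  have htail : ∀ k, ∑' j, a (k+j) * σ^(k+j) ≤ (C * K) * (a k * σ^k) := by
    intro k
    calc ∑' j, a (k+j) * σ^(k+j)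
        ≤ ∑' j, (C * (q^j * a k)) * σ^(k+j) :=
          ENNReal.tsum_le_tsum fun j => mul_le_mul_left (hdecay k j) _
      _ = ∑' j, (C * (a k * σ^k)) * (q*σ)^j := by
          refine tsum_congr fun j => ?_
          rw [pow_add, mul_pow]
          ring
      _ = (C * (a k * σ^k)) * ∑' j, (q*σ)^j := ENNReal.tsum_mul_left
      _ = (C * (a k * σ^k)) * (1 - q*σ)⁻¹ := by rw [ENNReal.tsum_geometric]
      _ ≤ (C * (a k * σ^k)) * K := by
          apply mul_le_mul_right
          rw [hK]
          exact ENNReal.inv_le_inv' (tsub_le_tsub_left hqσ 1)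
      _ = (C * K) * (a k * σ^k) := by ring
  -- final constant
  refine ⟨B ^ (θ-1:ℝ) * (C * K), ?_, ?_, ?_⟩
  · exact ENNReal.mul_pos hBθ0 (by simp [hC0, hK0])
  · exact ENNReal.mul_ne_top hBθt (ENNReal.mul_ne_top hCtop hKt)
  intro c
  calc ∑' n, a n * (∑ k ∈ Finset.range (n+1), c k) ^ θ
      ≤ ∑' n, B^(θ-1:ℝ) * ∑ k ∈ Finset.range (n+1), a n * σ^n * ((σ⁻¹)^k * c k ^ θ) := by
        refine ENNReal.tsum_le_tsum fun n => ?_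
        calc a n * (∑ k ∈ Finset.range (n+1), c k) ^ θ
            ≤ a n * ((σ ^ n * B ^ (θ-1:ℝ)) * ∑ k ∈ Finset.range (n+1), (σ⁻¹) ^ k * c k ^ θ) :=
              mul_le_mul_right (jens n c) _
          _ = B^(θ-1:ℝ) * (a n * σ^n * ∑ k ∈ Finset.range (n+1), (σ⁻¹) ^ k * c k ^ θ) := by ring
          _ = B^(θ-1:ℝ) * ∑ k ∈ Finset.range (n+1), a n * σ^n * ((σ⁻¹)^k * c k ^ θ) := by
              rw [Finset.mul_sum]
    _ = B^(θ-1:ℝ) * ∑' n, ∑ k ∈ Finset.range (n+1), a n * σ^n * ((σ⁻¹)^k * c k ^ θ) :=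
        ENNReal.tsum_mul_left
    _ = B^(θ-1:ℝ) * ∑' k, ∑' j, a (k+j) * σ^(k+j) * ((σ⁻¹)^k * c k ^ θ) := by
        rw [swap_tsum (fun n k => a n * σ^n * ((σ⁻¹)^k * c k ^ θ))]
    _ ≤ B^(θ-1:ℝ) * ∑' k, (C * K) * (a k * c k ^ θ) := by
        apply mul_le_mul_right
        refine ENNReal.tsum_le_tsum fun k => ?_
        calc ∑' j, a (k+j) * σ^(k+j) * ((σ⁻¹)^k * c k ^ θ)
            = (∑' j, a (k+j) * σ^(k+j)) * ((σ⁻¹)^k * c k ^ θ) := ENNReal.tsum_mul_right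
          _ ≤ ((C * K) * (a k * σ^k)) * ((σ⁻¹)^k * c k ^ θ) :=
              mul_le_mul_left (htail k) _
          _ = (C * K) * (a k * c k ^ θ) * (σ^k * (σ⁻¹)^k) := by ring
          _ = (C * K) * (a k * c k ^ θ) := by
              rw [← ENNReal.inv_pow, ENNReal.mul_inv_cancel (pow_ne_zero k hσ0)
                (ENNReal.pow_ne_top hσt), mul_one]
    _ = (B ^ (θ-1:ℝ) * (C * K)) * ∑' k, a k * c k ^ θ := by
        rw [ENNReal.tsum_mul_left, ← mul_assoc]


/-- Two-dimensional dual Hardy-type inequality (Lemma 6(b), m = 2, same weights). -/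
theorem stmt_10 (θ₁ θ₂ : ℝ) (hθ₁ : 1 ≤ θ₁) (hθ₂ : 1 ≤ θ₂)
    (a : ℕ → ℝ≥0∞) (ha : ∀ k, 0 < a k) (ha' : ∀ k, a k ≠ ⊤)
    (b : ℕ → ℕ → ℝ≥0∞) (hb : ∀ k₁ k₂, 0 < b k₁ k₂) (hb' : ∀ k₁ k₂, b k₁ k₂ ≠ ⊤)
    (C : ℝ≥0∞) (hC : 0 < C) (hCtop : C ≠ ⊤)
    (hHardy : ∀ n, ∑' k, a (n + k) ≤ C * a n) :
    ∃ C' : ℝ≥0∞, 0 < C' ∧ C' ≠ ⊤ ∧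
      ∑' n₂, a n₂ *
          (∑' n₁, a n₁ *
            (∑ k₂ ∈ Finset.range (n₂ + 1), ∑ k₁ ∈ Finset.range (n₁ + 1),
              b k₁ k₂) ^ θ₁) ^ (θ₂ / θ₁) ≤
        C' * ∑' n₂, a n₂ * (∑' n₁, a n₁ * (b n₁ n₂) ^ θ₁) ^ (θ₂ / θ₁) := by
  have hθ₁0 : (0:ℝ) < θ₁ := lt_of_lt_of_le one_pos hθ₁
  have hθ₂0 : (0:ℝ) < θ₂ := lt_of_lt_of_le one_pos hθ₂
  have hr0 : (0:ℝ) < θ₂ / θ₁ := by positivity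
  have hC1 : 1 ≤ C := by
    have h0 : a 0 ≤ C * a 0 := le_trans (by simpa using ENNReal.le_tsum (f := fun k => a (0+k)) 0) (hHardy 0)
    have h0' : 1 * a 0 ≤ C * a 0 := by simpa using h0
    exact (ENNReal.mul_le_mul_iff_left (ha 0).ne' (ha' 0)).mp h0'
  obtain ⟨C₁, hC₁0, hC₁t, hH₁⟩ := hardy1 θ₁ hθ₁ a ha' C hC1 hCtop hHardy
  obtain ⟨C₂, hC₂0, hC₂t, hH₂⟩ := hardy1 θ₂ hθ₂ a ha' C hC1 hCtop hHardy
  set d : ℕ → ℝ≥0∞ := fun k => (∑' n₁, a n₁ * b n₁ k ^ θ₁) ^ (1/θ₁) with hd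
  refine ⟨C₁ ^ (θ₂/θ₁) * C₂, ?_, ?_, ?_⟩
  · exact ENNReal.mul_pos (ENNReal.rpow_pos hC₁0 hC₁t).ne' hC₂0.ne'
  · exact ENNReal.mul_ne_top (ENNReal.rpow_ne_top_of_nonneg hr0.le hC₁t) hC₂t
  -- step 1 and 2: bound the inner tsum for each n₂
  have hinner : ∀ n₂, (∑' n₁, a n₁ *
      (∑ k₂ ∈ Finset.range (n₂ + 1), ∑ k₁ ∈ Finset.range (n₁ + 1), b k₁ k₂) ^ θ₁)
      ≤ C₁ * (∑ k₂ ∈ Finset.range (n₂+1), d k₂) ^ θ₁ := by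
    intro n₂
    have hswap : ∀ n₁, (∑ k₂ ∈ Finset.range (n₂ + 1), ∑ k₁ ∈ Finset.range (n₁ + 1), b k₁ k₂)
        = ∑ k₁ ∈ Finset.range (n₁ + 1), ∑ k₂ ∈ Finset.range (n₂ + 1), b k₁ k₂ :=
      fun n₁ => Finset.sum_comm
    have h1 : (∑' n₁, a n₁ *
        (∑ k₂ ∈ Finset.range (n₂ + 1), ∑ k₁ ∈ Finset.range (n₁ + 1), b k₁ k₂) ^ θ₁)
        ≤ C₁ * ∑' n₁, a n₁ * (∑ k₂ ∈ Finset.range (n₂ + 1), b n₁ k₂) ^ θ₁ := by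
      have := hH₁ (fun k₁ => ∑ k₂ ∈ Finset.range (n₂ + 1), b k₁ k₂)
      calc (∑' n₁, a n₁ *
          (∑ k₂ ∈ Finset.range (n₂ + 1), ∑ k₁ ∈ Finset.range (n₁ + 1), b k₁ k₂) ^ θ₁)
          = ∑' n₁, a n₁ *
            (∑ k₁ ∈ Finset.range (n₁ + 1), ∑ k₂ ∈ Finset.range (n₂ + 1), b k₁ k₂) ^ θ₁ := by
            exact tsum_congr fun n₁ => by rw [hswap n₁]
        _ ≤ C₁ * ∑' n₁, a n₁ * (∑ k₂ ∈ Finset.range (n₂ + 1), b n₁ k₂) ^ θ₁ := this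
    refine h1.trans (mul_le_mul_right ?_ C₁)
    -- Minkowski step
    have hm := minkowski_sum θ₁ hθ₁ a (Finset.range (n₂+1)) (fun k₂ n₁ => b n₁ k₂)
    have h2 : (∑' n₁, a n₁ * (∑ k₂ ∈ Finset.range (n₂ + 1), b n₁ k₂) ^ θ₁)
        = ((∑' n₁, a n₁ * (∑ k₂ ∈ Finset.range (n₂ + 1), b n₁ k₂) ^ θ₁) ^ (1/θ₁)) ^ θ₁ := by
      rw [← ENNReal.rpow_mul, one_div, inv_mul_cancel₀ hθ₁0.ne', ENNReal.rpow_one]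
    rw [h2]
    exact ENNReal.rpow_le_rpow hm hθ₁0.le
  calc ∑' n₂, a n₂ *
        (∑' n₁, a n₁ *
          (∑ k₂ ∈ Finset.range (n₂ + 1), ∑ k₁ ∈ Finset.range (n₁ + 1),
            b k₁ k₂) ^ θ₁) ^ (θ₂ / θ₁)
      ≤ ∑' n₂, a n₂ * (C₁ * (∑ k₂ ∈ Finset.range (n₂+1), d k₂) ^ θ₁) ^ (θ₂/θ₁) := by
        refine ENNReal.tsum_le_tsum fun n₂ => mul_le_mul_right ?_ _
        exact ENNReal.rpow_le_rpow (hinner n₂) hr0.le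
    _ = C₁ ^ (θ₂/θ₁) * ∑' n₂, a n₂ * (∑ k₂ ∈ Finset.range (n₂+1), d k₂) ^ θ₂ := by
        rw [← ENNReal.tsum_mul_left]
        refine tsum_congr fun n₂ => ?_
        rw [ENNReal.mul_rpow_of_nonneg _ _ hr0.le, ← ENNReal.rpow_mul,
          show θ₁ * (θ₂/θ₁) = θ₂ by field_simp]
        ring
    _ ≤ C₁ ^ (θ₂/θ₁) * (C₂ * ∑' n₂, a n₂ * d n₂ ^ θ₂) :=
        mul_le_mul_right (hH₂ d) _
    _ = (C₁ ^ (θ₂/θ₁) * C₂) * ∑' n₂, a n₂ * (∑' n₁, a n₁ * (b n₁ n₂) ^ θ₁) ^ (θ₂ / θ₁) := by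
        rw [← mul_assoc]
        congr 1
        refine tsum_congr fun n₂ => ?_
        congr 1
        rw [hd, ← ENNReal.rpow_mul, show (1/θ₁) * θ₂ = θ₂/θ₁ by field_simp]
end
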